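/- arXiv:0908.0488 — 9 statements merged into one kernel-verified Lean document; each statement's English description precedes it below -/
import Mathlib

section
/- Let G be a finite connected simple graph on vertex set V, let B ⊆ V and I = V ∖ B both be nonempty, suppose the subgraph of G induced on I is connected and every vertex of B has at least one neighbor in I. Let ω be a stress that is strictly positive on every edge of G having at least one endpoint in I, and let x : V → ℝ be such that every vertex i ∈ I is in equilibrium, i.e., Σ_{j : {i,j} ∈ E} ω_{ij}(x_i − x_j) = 0. If min_{b ∈ B} x_b < max_{b ∈ B} x_b, then for every i ∈ I, min_{b ∈ B} x_b < x_i < max_{b ∈ B} x_b. -/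
/-!
Suppose the boundary values are all `≤ c`, one of them `< c`, while some interior value is `≥ c`.
Then some interior vertex attains the global maximum of `x`. At an interior vertex the equilibrium
equation is a vanishing sum of terms `w i j * (x i - x j)`, all nonnegative at a maximum, so every
neighbour attains the maximum too. Connectivity of the interior spreads the maximum over all
interior vertices, and the boundary vertices inherit it from their interior neighbours; so `x` is
constant, contradicting the boundary value `< c`. The lower bound is the upper bound for `-x`.
-/

theorem SimpleGraph.Reachable.of_forall_adj_imp {V : Type*} {G : SimpleGraph V} {P : V → Prop}
    {u v : V} (huv : G.Reachable u v) (hP : ∀ a b, G.Adj a b → P a → P b) (hu : P u) : P v := by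
  obtain ⟨p⟩ := huv
  induction p with
  | nil => exact hu
  | cons hab _ ih => exact ih (hP _ _ hab hu)

namespace SimpleGraph

variable {V : Type*} [Fintype V] {G : SimpleGraph V} [DecidableRel G.Adj]

variable (G) in
def IsEquilibriumAt (w : V → V → ℝ) (x : V → ℝ) (i : V) : Prop :=
  ∑ j ∈ G.neighborFinset i, w i j * (x i - x j) = 0

theorem IsEquilibriumAt.neg {w : V → V → ℝ} {x : V → ℝ} {i : V}
    (h : G.IsEquilibriumAt w x i) : G.IsEquilibriumAt w (-x) i := by
  unfold IsEquilibriumAt at *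
  simp only [Pi.neg_apply, neg_sub_neg, ← neg_sub (x i), mul_neg, Finset.sum_neg_distrib, h,
    neg_zero]

theorem IsEquilibriumAt.eq_of_adj_of_isMax {w : V → V → ℝ} {x : V → ℝ} {i j : V}
    (h : G.IsEquilibriumAt w x i) (hw : ∀ k, G.Adj i k → 0 < w i k)
    (hmax : ∀ k, G.Adj i k → x k ≤ x i) (hij : G.Adj i j) : x j = x i := by
  have hterm_nonneg : ∀ k ∈ G.neighborFinset i, 0 ≤ w i k * (x i - x k) := fun k hk =>
    have hik := (G.mem_neighborFinset i k).1 hk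
    mul_nonneg (hw k hik).le (sub_nonneg.2 (hmax k hik))
  have hterm_zero := (Finset.sum_eq_zero_iff_of_nonneg hterm_nonneg).1 h j
    ((G.mem_neighborFinset i j).2 hij)
  rcases mul_eq_zero.1 hterm_zero with hw0 | hx0
  · exact absurd hw0 (hw j hij).ne'
  · linarith

variable {B : Finset V} {w : V → V → ℝ} {x : V → ℝ}

theorem eq_of_interior_isMax (hIconn : (G.induce {v : V | v ∉ B}).Connected)
    (hBnbr : ∀ b ∈ B, ∃ v, v ∉ B ∧ G.Adj b v)
    (hpos : ∀ i j, G.Adj i j → (i ∉ B ∨ j ∉ B) → 0 < w i j)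
    (heq : ∀ i, i ∉ B → G.IsEquilibriumAt w x i)
    {m : V} (hm : m ∉ B) (hmax : ∀ v, x v ≤ x m) (v : V) : x v = x m := by
  have hstep : ∀ i, i ∉ B → x i = x m → ∀ j, G.Adj i j → x j = x m := fun i hi hxi j hij =>
    ((heq i hi).eq_of_adj_of_isMax (fun k hk => hpos i k hk (.inl hi)) (fun k _ => hxi ▸ hmax k)
      hij).trans hxi
  have hinterior : ∀ i, i ∉ B → x i = x m := fun i hi =>
    (hIconn.preconnected ⟨m, hm⟩ ⟨i, hi⟩).of_forall_adj_imp
      (P := fun u : {v : V | v ∉ B} => x u = x m) (fun a b hab ha => hstep a a.2 ha b hab) rfl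
  by_cases hv : v ∈ B
  · obtain ⟨u, hu, huv⟩ := hBnbr v hv
    exact hstep u hu (hinterior u hu) v huv.symm
  · exact hinterior v hv

theorem lt_of_forall_boundary_le (hIconn : (G.induce {v : V | v ∉ B}).Connected)
    (hBnbr : ∀ b ∈ B, ∃ v, v ∉ B ∧ G.Adj b v)
    (hpos : ∀ i j, G.Adj i j → (i ∉ B ∨ j ∉ B) → 0 < w i j)
    (heq : ∀ i, i ∉ B → G.IsEquilibriumAt w x i)
    {c : ℝ} (hc : ∀ b ∈ B, x b ≤ c) (hlt : ∃ b ∈ B, x b < c) {i : V} (hi : i ∉ B) : x i < c := by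
  by_contra! hci
  obtain ⟨v₀, -, hv₀⟩ := Finset.univ.exists_max_image x ⟨i, Finset.mem_univ i⟩
  obtain ⟨m, hm, hmax⟩ : ∃ m, m ∉ B ∧ ∀ v, x v ≤ x m := by
    by_cases h₀ : v₀ ∈ B
    · exact ⟨i, hi, fun v => (hv₀ v (Finset.mem_univ v)).trans ((hc v₀ h₀).trans hci)⟩
    · exact ⟨v₀, h₀, fun v => hv₀ v (Finset.mem_univ v)⟩
  obtain ⟨b, hb, hxb⟩ := hlt
  have hxb_eq := eq_of_interior_isMax hIconn hBnbr hpos heq hm hmax b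
  linarith [hmax i]

end SimpleGraph

theorem strict_discrete_maximum_principle_general
    {V : Type*} [Fintype V]
    (G : SimpleGraph V) [DecidableRel G.Adj]
    (B : Finset V) (hB : B.Nonempty)
    (hIconn : (G.induce {v : V | v ∉ B}).Connected)
    (hBnbr : ∀ b ∈ B, ∃ v, v ∉ B ∧ G.Adj b v)
    (w : V → V → ℝ)
    (hpos : ∀ i j, G.Adj i j → (i ∉ B ∨ j ∉ B) → 0 < w i j)
    (x : V → ℝ)
    (heq : ∀ i, i ∉ B → ∑ j ∈ G.neighborFinset i, w i j * (x i - x j) = 0)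
    (hlt : B.inf' hB x < B.sup' hB x) :
    ∀ i, i ∉ B → B.inf' hB x < x i ∧ x i < B.sup' hB x := by
  intro i hi
  obtain ⟨bmin, hbmin, hxmin⟩ := B.exists_mem_eq_inf' hB x
  obtain ⟨bmax, hbmax, hxmax⟩ := B.exists_mem_eq_sup' hB x
  have hupper := SimpleGraph.lt_of_forall_boundary_le hIconn hBnbr hpos heq
    (fun b hb => B.le_sup' x hb) ⟨bmin, hbmin, hxmin ▸ hlt⟩ hi
  have hlower := SimpleGraph.lt_of_forall_boundary_le hIconn hBnbr hpos
    (fun j hj => SimpleGraph.IsEquilibriumAt.neg (heq j hj))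
    (fun b hb => neg_le_neg (B.inf'_le x hb)) ⟨bmax, hbmax, neg_lt_neg (hxmax ▸ hlt)⟩ hi
  exact ⟨neg_lt_neg_iff.1 hlower, hupper⟩

/-- **Strict discrete maximum principle.** Let `G` be a finite connected simple graph,
`B` a nonempty boundary set with nonempty complement `I`, the subgraph induced on `I`
connected, and every boundary vertex having a neighbor in `I`. Let `w` be a symmetric
stress strictly positive on every edge with at least one endpoint in `I`, and let
`x : V → ℝ` be in equilibrium at every interior vertex. If the boundary values are not
all equal, then every interior value lies strictly between the minimum and the maximum
of the boundary values. -/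
theorem strict_discrete_maximum_principle
    {V : Type*} [Fintype V] [DecidableEq V]
    (G : SimpleGraph V) [DecidableRel G.Adj] (hconn : G.Connected)
    (B : Finset V) (hB : B.Nonempty) (hI : ∃ v, v ∉ B)
    (hIconn : (G.induce {v : V | v ∉ B}).Connected)
    (hBnbr : ∀ b ∈ B, ∃ v, v ∉ B ∧ G.Adj b v)
    (w : V → V → ℝ) (hsym : ∀ i j, w i j = w j i)
    (hpos : ∀ i j, G.Adj i j → (i ∉ B ∨ j ∉ B) → 0 < w i j)
    (x : V → ℝ)
    (heq : ∀ i, i ∉ B → ∑ j ∈ G.neighborFinset i, w i j * (x i - x j) = 0)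
    (hlt : B.inf' hB x < B.sup' hB x) :
    ∀ i, i ∉ B → B.inf' hB x < x i ∧ x i < B.sup' hB x :=
  strict_discrete_maximum_principle_general G B hB hIconn hBnbr w hpos x heq hlt
end

section
/- Let G be a finite simple graph on vertex set V, let B ⊆ V have at least two elements and I = V ∖ B be nonempty, suppose the subgraph of G induced on I is connected and every vertex of B has at least one neighbor in I. Let ω be a stress that is strictly positive on every edge of G having at least one endpoint in I and zero on every edge with both endpoints in B. Then the reduced Laplacian L_{II} is invertible, and for all distinct i, j ∈ B the substitution stress ω̃_{ij} := −(L_{BB} − L_{BI} L_{II}^{-1} L_{IB})_{ij} is strictly positive. -/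
open Matrix BigOperators

/-- The weighted Laplacian of a graph `G` with stress `w`. -/
def weightedLaplacian {V : Type*} [Fintype V] [DecidableEq V]
    (G : SimpleGraph V) [DecidableRel G.Adj] (w : V → V → ℝ) : Matrix V V ℝ :=
  fun i j =>
    if i = j then ∑ k ∈ G.neighborFinset i, w i k
    else if G.Adj i j then - w i j else 0

namespace SubstitutionStressAux

variable {V : Type*} [Fintype V] [DecidableEq V]
  (G : SimpleGraph V) [DecidableRel G.Adj] (B : Finset V) (w : V → V → ℝ)

/-- The interior block of the weighted Laplacian. -/
def intM : Matrix {v : V // v ∉ B} {v : V // v ∉ B} ℝ :=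
  (weightedLaplacian G w).submatrix (fun i => (i : V)) (fun j => (j : V))

lemma intM_mulVec (y : {v : V // v ∉ B} → ℝ) (a : {v : V // v ∉ B}) :
    (intM G B w *ᵥ y) a
      = (∑ k ∈ G.neighborFinset (a : V), w (a : V) k) * y a
        - ∑ j : {v : V // v ∉ B}, (if G.Adj (a : V) (j : V) then w (a : V) (j : V) * y j else 0) := by
  classical
  have hterm : ∀ j : {v : V // v ∉ B},
      intM G B w a j * y j
        = (if a = j then (∑ k ∈ G.neighborFinset (a : V), w (a : V) k) * y j else 0)
          - (if G.Adj (a : V) (j : V) then w (a : V) (j : V) * y j else 0) := by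
    intro j
    by_cases h : a = j
    · subst h
      simp [intM, weightedLaplacian]
    · have h' : (a : V) ≠ (j : V) := fun hh => h (Subtype.ext hh)
      by_cases hadj : G.Adj (a : V) (j : V)
      · simp only [intM, Matrix.submatrix_apply, weightedLaplacian, if_neg h', if_pos hadj,
          if_neg h]
        ring
      · simp [intM, weightedLaplacian, h, h', hadj]
  have : (intM G B w *ᵥ y) a = ∑ j : {v : V // v ∉ B}, intM G B w a j * y j := rfl
  rw [this]
  simp_rw [hterm]
  rw [Finset.sum_sub_distrib, Finset.sum_ite_eq Finset.univ a
    (fun j => (∑ k ∈ G.neighborFinset (a : V), w (a : V) k) * y j)]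
  simp

lemma min_step
    (hpos : ∀ i j, G.Adj i j → (i ∉ B ∨ j ∉ B) → 0 < w i j)
    (y z : {v : V // v ∉ B} → ℝ)
    (hz : ∀ i, 0 ≤ z i) (hAy : intM G B w *ᵥ y = z)
    (a : {v : V // v ∉ B}) (hmin : ∀ j, y a ≤ y j) (hya : y a ≤ 0) :
    (∀ j : {v : V // v ∉ B}, G.Adj (a : V) (j : V) → y j = y a) ∧
      (y a < 0 → ∀ k ∈ B, ¬ G.Adj (a : V) k) := by
  classical
  set d : ℝ := ∑ k ∈ G.neighborFinset (a : V), w (a : V) k with hd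
  set T : ℝ := ∑ j : {v : V // v ∉ B},
      (if G.Adj (a : V) (j : V) then w (a : V) (j : V) * y j else 0) with hT
  set W : ℝ := ∑ j : {v : V // v ∉ B},
      (if G.Adj (a : V) (j : V) then w (a : V) (j : V) else 0) with hW
  have hza : z a = d * y a - T := by rw [← hAy, intM_mulVec]
  have hWmul : W * y a = ∑ j : {v : V // v ∉ B},
      (if G.Adj (a : V) (j : V) then w (a : V) (j : V) * y a else 0) := by
    rw [hW, Finset.sum_mul]
    refine Finset.sum_congr rfl fun j _ => ?_
    by_cases hadj : G.Adj (a : V) (j : V) <;> simp [hadj]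
  have htermle : ∀ j ∈ (Finset.univ : Finset {v : V // v ∉ B}),
      (if G.Adj (a : V) (j : V) then w (a : V) (j : V) * y a else 0)
        ≤ (if G.Adj (a : V) (j : V) then w (a : V) (j : V) * y j else 0) := by
    intro j _
    by_cases hadj : G.Adj (a : V) (j : V)
    · simp only [hadj, if_true]
      exact mul_le_mul_of_nonneg_left (hmin j) (le_of_lt (hpos _ _ hadj (Or.inl a.2)))
    · simp [hadj]
  have hWT : W * y a ≤ T := by rw [hWmul, hT]; exact Finset.sum_le_sum htermle
  -- rewrite W as a sum over interior neighbors, and d - W as a sum over boundary neighbors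
  have hWfin : W = ∑ v ∈ (G.neighborFinset (a : V)).filter (fun v => v ∉ B), w (a : V) v := by
    rw [hW, ← Finset.sum_subtype (Finset.univ.filter (fun v : V => v ∉ B))
      (by simp) (fun v => if G.Adj (a : V) v then w (a : V) v else 0)]
    rw [← Finset.sum_filter]
    refine Finset.sum_congr ?_ fun _ _ => rfl
    ext v
    simp [SimpleGraph.mem_neighborFinset, and_comm]
  have hdsplit : d = (∑ v ∈ (G.neighborFinset (a : V)).filter (fun v => v ∈ B), w (a : V) v)
      + ∑ v ∈ (G.neighborFinset (a : V)).filter (fun v => v ∉ B), w (a : V) v := by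
    rw [hd, ← Finset.sum_filter_add_sum_filter_not (G.neighborFinset (a : V))
      (fun v => v ∈ B) (fun v => w (a : V) v)]
  set Bs : ℝ := ∑ v ∈ (G.neighborFinset (a : V)).filter (fun v => v ∈ B), w (a : V) v with hBs
  have hBsnn : 0 ≤ Bs := by
    refine Finset.sum_nonneg fun v hv => ?_
    rw [Finset.mem_filter, SimpleGraph.mem_neighborFinset] at hv
    exact le_of_lt (hpos _ _ hv.1 (Or.inl a.2))
  have hdW : d - W = Bs := by rw [hWfin, hdsplit]; ring
  have hchain1 : z a ≤ Bs * y a := by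
    rw [hza]
    have : d * y a - T ≤ d * y a - W * y a := by linarith
    calc d * y a - T ≤ d * y a - W * y a := this
      _ = (d - W) * y a := by ring
      _ = Bs * y a := by rw [hdW]
  have hchain2 : Bs * y a ≤ 0 := mul_nonpos_of_nonneg_of_nonpos hBsnn hya
  have hz0 : z a = 0 := le_antisymm (by linarith [hz a]) (hz a)
  have hBsy : Bs * y a = 0 := le_antisymm hchain2 (by linarith [hz a])
  have hTW : T = W * y a := by
    have h1 : T = d * y a := by linarith [hza, hz0]
    have h2 : (d - W) * y a = 0 := by rw [hdW]; exact hBsy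
    nlinarith [h1, h2]
  constructor
  · intro j hadj
    have := (Finset.sum_eq_sum_iff_of_le htermle).mp (by rw [← hWmul, ← hT, hTW]) j
      (Finset.mem_univ j)
    rw [if_pos hadj, if_pos hadj] at this
    have hw : 0 < w (a : V) (j : V) := hpos _ _ hadj (Or.inl a.2)
    exact (mul_left_cancel₀ (ne_of_gt hw) this.symm)
  · intro hneg k hk hadj
    have hBs0 : Bs = 0 := by
      rcases lt_or_eq_of_le hBsnn with h | h
      · nlinarith
      · exact h.symm
    have hkmem : k ∈ (G.neighborFinset (a : V)).filter (fun v => v ∈ B) := by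
      rw [Finset.mem_filter, SimpleGraph.mem_neighborFinset]
      exact ⟨hadj, hk⟩
    have : 0 < Bs := by
      refine Finset.sum_pos' (fun v hv => ?_) ⟨k, hkmem, ?_⟩
      · rw [Finset.mem_filter, SimpleGraph.mem_neighborFinset] at hv
        exact le_of_lt (hpos _ _ hv.1 (Or.inl a.2))
      · exact hpos _ _ hadj (Or.inl a.2)
    linarith

lemma propagate (hIconn : (G.induce {v : V | v ∉ B}).Connected)
    (Q : {v : V // v ∉ B} → Prop)
    (hQ : ∀ a b : {v : V // v ∉ B}, Q a → G.Adj (a : V) (b : V) → Q b)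
    (k : {v : V // v ∉ B}) (hk : Q k) : ∀ i, Q i := by
  intro i
  obtain ⟨p⟩ := hIconn.preconnected ⟨k.1, k.2⟩ ⟨i.1, i.2⟩
  have key : ∀ (u v : {v : V | v ∉ B}) (_ : (G.induce {v : V | v ∉ B}).Walk u v),
      Q ⟨u.1, u.2⟩ → Q ⟨v.1, v.2⟩ := by
    intro u v p
    induction p with
    | nil => exact id
    | cons h p ih =>
      intro hu
      exact ih (hQ _ _ hu (by simpa using h))
  exact key _ _ p hk

lemma mp (hBne : B.Nonempty)
    (hIconn : (G.induce {v : V | v ∉ B}).Connected)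
    (hBnbr : ∀ b ∈ B, ∃ v, v ∉ B ∧ G.Adj b v)
    (hpos : ∀ i j, G.Adj i j → (i ∉ B ∨ j ∉ B) → 0 < w i j)
    (y z : {v : V // v ∉ B} → ℝ)
    (hz : ∀ i, 0 ≤ z i) (hAy : intM G B w *ᵥ y = z) : ∀ i, 0 ≤ y i := by
  classical
  by_contra hcon
  push_neg at hcon
  obtain ⟨i0, hi0⟩ := hcon
  obtain ⟨a, -, hamin⟩ := Finset.exists_min_image Finset.univ y ⟨i0, Finset.mem_univ _⟩
  have hmin : ∀ j, y a ≤ y j := fun j => hamin j (Finset.mem_univ _)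
  have hya : y a < 0 := lt_of_le_of_lt (hmin i0) hi0
  have hall : ∀ j, y j = y a := by
    refine propagate G B hIconn (fun j => y j = y a) ?_ a rfl
    intro b c hb hadj
    have hbmin : ∀ j, y b ≤ y j := fun j => hb ▸ hmin j
    have := (min_step G B w hpos y z hz hAy b hbmin (hb ▸ le_of_lt hya)).1 c hadj
    rw [this, hb]
  obtain ⟨b0, hb0⟩ := hBne
  obtain ⟨v, hv, hadj⟩ := hBnbr b0 hb0
  have hvval : y ⟨v, hv⟩ = y a := hall ⟨v, hv⟩
  have hvmin : ∀ j, y ⟨v, hv⟩ ≤ y j := fun j => hvval ▸ hmin j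
  have h2 := (min_step G B w hpos y z hz hAy ⟨v, hv⟩ hvmin (hvval ▸ le_of_lt hya)).2
    (hvval ▸ hya) b0 hb0
  exact h2 hadj.symm

lemma mp_pos (hBne : B.Nonempty)
    (hIconn : (G.induce {v : V | v ∉ B}).Connected)
    (hBnbr : ∀ b ∈ B, ∃ v, v ∉ B ∧ G.Adj b v)
    (hpos : ∀ i j, G.Adj i j → (i ∉ B ∨ j ∉ B) → 0 < w i j)
    (y z : {v : V // v ∉ B} → ℝ)
    (hz : ∀ i, 0 ≤ z i) (hAy : intM G B w *ᵥ y = z)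
    (j0 : {v : V // v ∉ B}) (hj0 : 0 < z j0) : ∀ i, 0 < y i := by
  classical
  have hnn := mp G B w hBne hIconn hBnbr hpos y z hz hAy
  by_contra hcon
  push_neg at hcon
  obtain ⟨k, hk⟩ := hcon
  have hk0 : y k = 0 := le_antisymm hk (hnn k)
  have hall : ∀ j, y j = 0 := by
    refine propagate G B hIconn (fun j => y j = 0) ?_ k hk0
    intro b c hb hadj
    have hbmin : ∀ j, y b ≤ y j := fun j => by rw [hb]; exact hnn j
    have := (min_step G B w hpos y z hz hAy b hbmin (le_of_eq hb)).1 c hadj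
    rw [this, hb]
  have hy0 : y = 0 := funext fun i => hall i
  rw [hy0, Matrix.mulVec_zero] at hAy
  rw [← hAy] at hj0
  exact lt_irrefl _ hj0

lemma det_unit (hI : ∃ v, v ∉ B) (hBne : B.Nonempty)
    (hIconn : (G.induce {v : V | v ∉ B}).Connected)
    (hBnbr : ∀ b ∈ B, ∃ v, v ∉ B ∧ G.Adj b v)
    (hpos : ∀ i j, G.Adj i j → (i ∉ B ∨ j ∉ B) → 0 < w i j) :
    IsUnit (intM G B w).det := by
  classical
  rw [isUnit_iff_ne_zero]
  intro hdet
  obtain ⟨y, hy0, hAy⟩ := (Matrix.exists_mulVec_eq_zero_iff).mpr hdet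
  have h1 := mp G B w hBne hIconn hBnbr hpos y 0 (fun i => le_refl (0:ℝ)) hAy
  have h2 := mp G B w hBne hIconn hBnbr hpos (-y) 0 (fun i => le_refl (0:ℝ))
    (by rw [Matrix.mulVec_neg, hAy, neg_zero])
  refine hy0 (funext fun i => le_antisymm ?_ (h1 i))
  have := h2 i
  simpa using this

lemma inv_pos_entries (hI : ∃ v, v ∉ B) (hBne : B.Nonempty)
    (hIconn : (G.induce {v : V | v ∉ B}).Connected)
    (hBnbr : ∀ b ∈ B, ∃ v, v ∉ B ∧ G.Adj b v)
    (hpos : ∀ i j, G.Adj i j → (i ∉ B ∨ j ∉ B) → 0 < w i j) :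
    ∀ k l, 0 < (intM G B w)⁻¹ k l := by
  classical
  intro k l
  have hdet := det_unit G B w hI hBne hIconn hBnbr hpos
  set y := (intM G B w)⁻¹ *ᵥ Pi.single l 1 with hy
  have hAy : intM G B w *ᵥ y = Pi.single l 1 := by
    rw [hy, Matrix.mulVec_mulVec, Matrix.mul_nonsing_inv _ hdet, Matrix.one_mulVec]
  have hz : ∀ i, 0 ≤ (Pi.single l 1 : {v : V // v ∉ B} → ℝ) i := by
    intro i
    rcases eq_or_ne i l with h | h
    · subst h; simp
    · rw [Pi.single_eq_of_ne h]
  have hj0 : 0 < (Pi.single l 1 : {v : V // v ∉ B} → ℝ) l := by simp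
  have hposy := mp_pos G B w hBne hIconn hBnbr hpos y _ hz hAy l hj0 k
  have hyk : y k = (intM G B w)⁻¹ k l := by
    rw [hy]
    show (∑ m : {v : V // v ∉ B}, (intM G B w)⁻¹ k m * (Pi.single l 1 : {v : V // v ∉ B} → ℝ) m) = _
    simp [Pi.single_apply, mul_ite]
  rwa [hyk] at hposy

end SubstitutionStressAux

open SubstitutionStressAux in
/-- **Positivity of the substitution stresses (Lemma 2, part 1).** Let `G` be a finite
simple graph, `B` a boundary set with at least two vertices and nonempty complement `I`,
the subgraph induced on `I` connected, and every boundary vertex having a neighbor in `I`.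
If the stress `w` is symmetric, strictly positive on every edge with at least one endpoint
in `I` and zero on edges inside `B`, then the reduced Laplacian `L_II` is invertible and
every substitution stress `ω̃_ij = -(L_BB - L_BI L_II⁻¹ L_IB)_ij` (for `i ≠ j` in `B`)
is strictly positive. -/
theorem substitution_stress_positive
    {V : Type*} [Fintype V] [DecidableEq V]
    (G : SimpleGraph V) [DecidableRel G.Adj]
    (B : Finset V) (hB : 2 ≤ B.card) (hI : ∃ v, v ∉ B)
    (hIconn : (G.induce {v : V | v ∉ B}).Connected)
    (hBnbr : ∀ b ∈ B, ∃ v, v ∉ B ∧ G.Adj b v)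
    (w : V → V → ℝ) (hsym : ∀ i j, w i j = w j i)
    (hpos : ∀ i j, G.Adj i j → (i ∉ B ∨ j ∉ B) → 0 < w i j)
    (hzero : ∀ i j, i ∈ B → j ∈ B → w i j = 0) :
    IsUnit ((weightedLaplacian G w).submatrix
        (fun i : {v : V // v ∉ B} => (i : V)) (fun j : {v : V // v ∉ B} => (j : V))).det ∧
    ∀ i j : {v : V // v ∈ B}, i ≠ j →
      0 < -(((weightedLaplacian G w).submatrix
              (fun i : {v : V // v ∈ B} => (i : V)) (fun j : {v : V // v ∈ B} => (j : V))
            - ((weightedLaplacian G w).submatrix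
                (fun i : {v : V // v ∈ B} => (i : V)) (fun j : {v : V // v ∉ B} => (j : V)))
              * ((weightedLaplacian G w).submatrix
                  (fun i : {v : V // v ∉ B} => (i : V)) (fun j : {v : V // v ∉ B} => (j : V)))⁻¹
              * ((weightedLaplacian G w).submatrix
                  (fun i : {v : V // v ∉ B} => (i : V)) (fun j : {v : V // v ∈ B} => (j : V))))
            i j) := by
  classical
  have hBne : B.Nonempty := Finset.card_pos.mp (lt_of_lt_of_le (by norm_num) hB)
  have hdet := det_unit G B w hI hBne hIconn hBnbr hpos
  have hinv := inv_pos_entries G B w hI hBne hIconn hBnbr hpos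
  refine ⟨hdet, ?_⟩
  intro i j hij
  have hij' : (i : V) ≠ (j : V) := fun h => hij (Subtype.ext h)
  set LBB := (weightedLaplacian G w).submatrix
      (fun i : {v : V // v ∈ B} => (i : V)) (fun j : {v : V // v ∈ B} => (j : V)) with hLBB
  set LBI := (weightedLaplacian G w).submatrix
      (fun i : {v : V // v ∈ B} => (i : V)) (fun j : {v : V // v ∉ B} => (j : V)) with hLBI
  set LIB := (weightedLaplacian G w).submatrix
      (fun i : {v : V // v ∉ B} => (i : V)) (fun j : {v : V // v ∈ B} => (j : V)) with hLIB
  set Ainv := ((weightedLaplacian G w).submatrix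
      (fun i : {v : V // v ∉ B} => (i : V)) (fun j : {v : V // v ∉ B} => (j : V)))⁻¹ with hAinv
  have hAinvpos : ∀ k l, 0 < Ainv k l := hinv
  have hBB0 : LBB i j = 0 := by
    rw [hLBB]
    simp only [Matrix.submatrix_apply, weightedLaplacian, if_neg hij']
    rw [hzero _ _ i.2 j.2]
    simp
  have hBIle : ∀ k : {v : V // v ∉ B}, LBI i k ≤ 0 := by
    intro k
    rw [hLBI]
    simp only [Matrix.submatrix_apply, weightedLaplacian]
    have hne : (i : V) ≠ (k : V) := fun h => k.2 (h ▸ i.2)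
    rw [if_neg hne]
    by_cases hadj : G.Adj (i : V) (k : V)
    · rw [if_pos hadj]
      linarith [hpos _ _ hadj (Or.inr k.2)]
    · rw [if_neg hadj]
  have hIBle : ∀ l : {v : V // v ∉ B}, LIB l j ≤ 0 := by
    intro l
    rw [hLIB]
    simp only [Matrix.submatrix_apply, weightedLaplacian]
    have hne : (l : V) ≠ (j : V) := fun h => l.2 (h ▸ j.2)
    rw [if_neg hne]
    by_cases hadj : G.Adj (l : V) (j : V)
    · rw [if_pos hadj]
      linarith [hpos _ _ hadj (Or.inl l.2)]
    · rw [if_neg hadj]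
  have hexpand : -((LBB - LBI * Ainv * LIB) i j)
      = ∑ l : {v : V // v ∉ B}, (∑ k : {v : V // v ∉ B}, LBI i k * Ainv k l) * LIB l j := by
    rw [Matrix.sub_apply, hBB0, Matrix.mul_apply]
    simp only [Matrix.mul_apply]
    ring
  rw [hexpand]
  -- choose witnesses
  obtain ⟨vi, hvi, hadji⟩ := hBnbr i i.2
  obtain ⟨vj, hvj, hadjj⟩ := hBnbr j j.2
  set k0 : {v : V // v ∉ B} := ⟨vi, hvi⟩
  set l0 : {v : V // v ∉ B} := ⟨vj, hvj⟩
  have hBIk0 : LBI i k0 < 0 := by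
    rw [hLBI]
    simp only [Matrix.submatrix_apply, weightedLaplacian]
    have hne : (i : V) ≠ (k0 : V) := by
      intro h
      rw [show ((k0 : V)) = vi from rfl] at h
      exact hvi (h ▸ i.2)
    rw [if_neg hne, if_pos hadji]
    linarith [hpos _ _ hadji (Or.inr hvi)]
  have hIBl0 : LIB l0 j < 0 := by
    rw [hLIB]
    simp only [Matrix.submatrix_apply, weightedLaplacian]
    have hne : (l0 : V) ≠ (j : V) := by
      intro h
      rw [show ((l0 : V)) = vj from rfl] at h
      exact hvj (by rw [h]; exact j.2)
    have hadj' : G.Adj (l0 : V) (j : V) := hadjj.symm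
    rw [if_neg hne, if_pos hadj']
    linarith [hpos _ _ hadj' (Or.inl hvj)]
  have hinner_nonpos : ∀ l, (∑ k : {v : V // v ∉ B}, LBI i k * Ainv k l) ≤ 0 := by
    intro l
    refine Finset.sum_nonpos fun k _ => ?_
    exact mul_nonpos_of_nonpos_of_nonneg (hBIle k) (le_of_lt (hAinvpos k l))
  have hinner_neg : (∑ k : {v : V // v ∉ B}, LBI i k * Ainv k l0) < 0 := by
    have : 0 < ∑ k : {v : V // v ∉ B}, -(LBI i k * Ainv k l0) := by
      refine Finset.sum_pos' (fun k _ => ?_) ⟨k0, Finset.mem_univ _, ?_⟩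
      · have := mul_nonpos_of_nonpos_of_nonneg (hBIle k) (le_of_lt (hAinvpos k l0))
        linarith
      · have := mul_neg_of_neg_of_pos hBIk0 (hAinvpos k0 l0)
        linarith
    rw [Finset.sum_neg_distrib] at this
    linarith
  refine Finset.sum_pos' (fun l _ => ?_) ⟨l0, Finset.mem_univ _, ?_⟩
  · nlinarith [hinner_nonpos l, hIBle l]
  · exact mul_pos_of_neg_of_neg hinner_neg hIBl0
end

section
/- Let G be a finite simple graph on vertex set V with n vertices, let B ⊆ V have at least two elements (say k = |B|) and I = V ∖ B be nonempty, suppose the subgraph of G induced on I is connected and every vertex of B has at least one neighbor in I. Let ω be the stress that equals 1 on every edge of G having at least one endpoint in I and 0 on every edge with both endpoints in B. Then for all distinct i, j ∈ B the substitution stress ω̃_{ij} := −(L_{BB} − L_{BI} L_{II}^{-1} L_{IB})_{ij} satisfies ω̃_{ij} < n − k = |I|. -/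
/-!
The stress `ω` is the unit stress of `G` with its edges inside `B` deleted, so `L` is the
Laplacian of that graph and hence positive semidefinite. A vector on `I` with vanishing
Laplacian form is constant along edges; connectivity of `I` and an edge from `B` into `I` force
it to vanish, so `L_II` is positive definite and the Schur complement `S` of `L_II` is positive
semidefinite. Testing `S` on `e_i + e_j` gives `-2 S_ij ≤ S_ii + S_jj`. Finally
`S_ii = L_ii - c ⬝ L_II⁻¹ c` with `c = L_Ii ≠ 0`, so `S_ii < L_ii`, and `L_ii` counts the
interior neighbours of `i`, at most `|I|`.
-/

open Matrix BigOperators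

open Finset

theorem Fintype.sum_dite_eq_sum_subtype {V R : Type*} [Fintype V] [AddCommMonoid R]
    (p : V → Prop) [DecidablePred p] (f : ∀ v, p v → R) :
    ∑ v, (if h : p v then f v h else 0) = ∑ i : {v // p v}, f i i.2 := by
  have hcompl : ∑ i : {v // ¬p v}, (if h : p i then f i h else 0) = 0 :=
    Finset.sum_eq_zero fun i _ => dif_neg i.2
  rw [← Fintype.sum_subtype_add_sum_subtype p, hcompl, add_zero]
  exact Finset.sum_congr rfl fun i _ => dif_pos i.2

namespace Matrix

variable {V : Type*} [Fintype V]

theorem dotProduct_toBlock_mulVec {R : Type*} [CommSemiring R] (M : Matrix V V R)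
    (p : V → Prop) [DecidablePred p] (x : {v // p v} → R) :
    x ⬝ᵥ (M.toBlock p p *ᵥ x) =
      (fun v => if h : p v then x ⟨v, h⟩ else 0) ⬝ᵥ
        (M *ᵥ fun v => if h : p v then x ⟨v, h⟩ else 0) := by
  simp only [dotProduct, mulVec, toBlock_apply, mul_dite, dite_mul, mul_zero, zero_mul,
    Fintype.sum_dite_eq_sum_subtype]

omit [Fintype V] in
theorem submatrix_sumCompl_eq_fromBlocks {R : Type*} (M : Matrix V V R) (p : V → Prop)
    [DecidablePred p] :
    M.submatrix (Equiv.sumCompl p) (Equiv.sumCompl p) =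
      fromBlocks (M.toBlock p p) (M.toBlock p (¬p ·)) (M.toBlock (¬p ·) p)
        (M.toBlock (¬p ·) (¬p ·)) := by
  ext (a | a) (b | b) <;> rfl

variable [DecidableEq V]

noncomputable def schurComplement {R : Type*} [CommRing R] (M : Matrix V V R) (p : V → Prop)
    [DecidablePred p] : Matrix {v // p v} {v // p v} R :=
  M.toBlock p p - M.toBlock p (¬p ·) * (M.toBlock (¬p ·) (¬p ·))⁻¹ * M.toBlock (¬p ·) p

theorem PosSemidef.schurComplement {𝕜 : Type*} [Field 𝕜] [PartialOrder 𝕜] [StarRing 𝕜]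
    [StarOrderedRing 𝕜] {M : Matrix V V 𝕜} (hM : M.PosSemidef) {p : V → Prop} [DecidablePred p]
    (hD : (M.toBlock (¬p ·) (¬p ·)).PosDef) :
    (M.schurComplement p).PosSemidef := by
  have := hD.isUnit.invertible
  have hC : M.toBlock (¬p ·) p = (M.toBlock p (¬p ·))ᴴ := by
    ext i j
    exact (congrFun (congrFun hM.isHermitian.eq i) j).symm
  have hblock := hM.submatrix (Equiv.sumCompl p)
  rw [submatrix_sumCompl_eq_fromBlocks, hC] at hblock
  rw [Matrix.schurComplement, hC]
  exact (PosDef.fromBlocks₂₂ _ _ hD).mp hblock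

theorem PosSemidef.neg_two_mul_apply_le {S : Matrix V V ℝ}
    (hS : S.PosSemidef) (i j : V) : -(2 * S i j) ≤ S i i + S j j := by
  have hsymm : S j i = S i j := by simpa using congrFun (congrFun hS.isHermitian.eq i) j
  have := hS.dotProduct_mulVec_nonneg (Pi.single i 1 + Pi.single j 1)
  simp only [star_trivial, mulVec_add, mulVec_single, MulOpposite.op_one, one_smul,
    dotProduct_add, add_dotProduct, single_dotProduct, col_apply, one_mul] at this
  linarith

theorem schurComplement_apply_self_lt {M : Matrix V V ℝ} (hM : M.IsSymm) {p : V → Prop}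
    [DecidablePred p] (hD : (M.toBlock (¬p ·) (¬p ·)).PosDef) (k : {v // p v})
    (hk : ∃ v, ¬p v ∧ M v k ≠ 0) :
    M.schurComplement p k k < M k k := by
  set c : {v // ¬p v} → ℝ := fun v => M v k
  have hc : c ≠ 0 := fun h => by
    obtain ⟨v, hv, hvk⟩ := hk
    exact hvk (congrFun h ⟨v, hv⟩)
  have hcorr : (M.toBlock p (¬p ·) * (M.toBlock (¬p ·) (¬p ·))⁻¹ * M.toBlock (¬p ·) p) k k =
      star c ⬝ᵥ ((M.toBlock (¬p ·) (¬p ·))⁻¹ *ᵥ c) := by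
    rw [Matrix.mul_assoc, mul_apply]
    simp [dotProduct, mulVec, mul_apply, c, hM.apply k]
  have hpos := hD.inv.dotProduct_mulVec_pos hc
  simp only [Matrix.schurComplement, sub_apply, toBlock_apply]
  linarith

end Matrix

namespace SimpleGraph

variable {V : Type*} [Fintype V] [DecidableEq V]

theorem weightedLaplacian_eq_lapMatrix {G H : SimpleGraph V} [DecidableRel G.Adj]
    [DecidableRel H.Adj] {w : V → V → ℝ}
    (hw : ∀ i j, (if G.Adj i j then w i j else 0) = if H.Adj i j then 1 else 0) :
    weightedLaplacian G w = H.lapMatrix ℝ := by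
  ext i j
  by_cases hij : i = j
  · subst hij
    simp only [weightedLaplacian, lapMatrix, degMatrix, degree, neighborFinset_eq_filter,
      sum_filter, hw, sum_boole]
    simp
  · have hneg := congrArg Neg.neg (hw i j)
    simp only [neg_ite, neg_zero] at hneg
    simp [weightedLaplacian, lapMatrix, degMatrix, hij, adjMatrix_apply, hneg, apply_ite]

theorem weightedLaplacian_eq_lapMatrix_deleteEdges_sym2 (G : SimpleGraph V) [DecidableRel G.Adj]
    (B : Finset V) {w : V → V → ℝ}
    (hw : ∀ i j, G.Adj i j → ((i ∉ B ∨ j ∉ B) → w i j = 1) ∧ (i ∈ B → j ∈ B → w i j = 0)) :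
    weightedLaplacian G w = (G.deleteEdges (B.sym2 : Set (Sym2 V))).lapMatrix ℝ := by
  refine weightedLaplacian_eq_lapMatrix fun a b => ?_
  by_cases hab : G.Adj a b
  · by_cases haB : a ∈ B ∧ b ∈ B
    · simp [hab, haB, (hw a b hab).2 haB.1 haB.2]
    · simp [hab, haB, (hw a b hab).1 (not_and_or.mp haB)]
  · simp [hab]

omit [Fintype V] [DecidableEq V] in
theorem induce_compl_deleteEdges_sym2 (G : SimpleGraph V) (B : Finset V) :
    (G.deleteEdges (B.sym2 : Set (Sym2 V))).induce {v | v ∉ B} = G.induce {v | v ∉ B} := by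
  ext a b
  simp [show (a : V) ∉ B from a.2]

variable (H : SimpleGraph V) [DecidableRel H.Adj]

theorem lapMatrix_apply_self {R : Type*} [AddGroupWithOne R] (v : V) :
    H.lapMatrix R v v = H.degree v := by
  simp [lapMatrix, degMatrix]

theorem lapMatrix_apply_of_adj {R : Type*} [AddGroupWithOne R] {u v : V} (huv : H.Adj u v) :
    H.lapMatrix R u v = -1 := by
  simp [lapMatrix, degMatrix, huv.ne, huv]

theorem degree_add_card_le {B : Finset V} {b : V} (hb : ∀ v ∈ B, ¬H.Adj b v) :
    H.degree b + #B ≤ Fintype.card V := by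
  have hdisj : Disjoint (H.neighborFinset b) B :=
    Finset.disjoint_left.mpr fun _ hv hvB => hb _ hvB ((H.mem_neighborFinset _ _).mp hv)
  rw [← card_neighborFinset_eq_degree, ← card_union_of_disjoint hdisj]
  exact card_le_univ _

theorem posDef_lapMatrix_toBlock_compl {p : V → Prop} [DecidablePred p]
    (hconn : (H.induce {v | ¬p v}).Connected) (hnbr : ∃ b v, p b ∧ ¬p v ∧ H.Adj b v) :
    ((H.lapMatrix ℝ).toBlock (¬p ·) (¬p ·)).PosDef := by
  refine PosDef.of_dotProduct_mulVec_pos ((isHermitian_lapMatrix ℝ H).submatrix _) fun x hx => ?_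
  set y : V → ℝ := fun v => if h : ¬p v then x ⟨v, h⟩ else 0
  have hquad : star x ⬝ᵥ ((H.lapMatrix ℝ).toBlock (¬p ·) (¬p ·) *ᵥ x) =
      y ⬝ᵥ (H.lapMatrix ℝ *ᵥ y) := by
    rw [star_trivial, dotProduct_toBlock_mulVec]
  have hnonneg := (posSemidef_lapMatrix ℝ H).dotProduct_mulVec_nonneg y
  rw [star_trivial] at hnonneg
  rw [hquad]
  refine hnonneg.lt_of_ne' fun h0 => hx ?_
  rw [← toLinearMap₂'_apply', lapMatrix_toLinearMap₂'_apply'_eq_zero_iff_forall_adj] at h0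
  obtain ⟨b, v₀, hb, hv₀, hbv₀⟩ := hnbr
  have hxv₀ : x ⟨v₀, hv₀⟩ = 0 := by
    simpa [y, hb, hv₀] using (h0 b v₀ hbv₀).symm
  have hedge : ∀ a b : {v // ¬p v}, (H.induce {v | ¬p v}).Adj a b → x a = x b :=
    fun a b hab => by simpa [y, a.2, b.2] using h0 a b hab
  funext u
  show x u = 0
  induction (reachable_iff_reflTransGen _ _).mp (hconn.preconnected ⟨v₀, hv₀⟩ u) with
  | refl => exact hxv₀
  | tail _ hab ih => exact (hedge _ _ hab).symm.trans ih

end SimpleGraph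

theorem substitution_stress_upper_bound_general
    {V : Type*} [Fintype V] [DecidableEq V]
    (G : SimpleGraph V) [DecidableRel G.Adj]
    (B : Finset V)
    (hIconn : (G.induce {v : V | v ∉ B}).Connected)
    (hBnbr : ∀ b ∈ B, ∃ v, v ∉ B ∧ G.Adj b v)
    (w : V → V → ℝ)
    (hw : ∀ i j, G.Adj i j → ((i ∉ B ∨ j ∉ B) → w i j = 1) ∧ (i ∈ B → j ∈ B → w i j = 0)) :
    ∀ i j : {v : V // v ∈ B}, i ≠ j →
      -(((weightedLaplacian G w).submatrix
              (fun i : {v : V // v ∈ B} => (i : V)) (fun j : {v : V // v ∈ B} => (j : V))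
            - ((weightedLaplacian G w).submatrix
                (fun i : {v : V // v ∈ B} => (i : V)) (fun j : {v : V // v ∉ B} => (j : V)))
              * ((weightedLaplacian G w).submatrix
                  (fun i : {v : V // v ∉ B} => (i : V)) (fun j : {v : V // v ∉ B} => (j : V)))⁻¹
              * ((weightedLaplacian G w).submatrix
                  (fun i : {v : V // v ∉ B} => (i : V)) (fun j : {v : V // v ∈ B} => (j : V))))
            i j)
        < (Fintype.card V : ℝ) - B.card := by
  intro i j _
  set H := G.deleteEdges (B.sym2 : Set (Sym2 V))
  have hHconn : (H.induce {v | v ∉ B}).Connected := by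
    rwa [G.induce_compl_deleteEdges_sym2]
  obtain ⟨v, hv, hiv⟩ := hBnbr i i.2
  have hD : ((H.lapMatrix ℝ).toBlock (· ∉ B) (· ∉ B)).PosDef :=
    H.posDef_lapMatrix_toBlock_compl hHconn ⟨i, v, i.2, hv, by simp [H, hiv, hv]⟩
  have hdiag : ∀ k : {v // v ∈ B},
      (H.lapMatrix ℝ).schurComplement (· ∈ B) k k < Fintype.card V - #B := by
    intro k
    obtain ⟨u, hu, hku⟩ := hBnbr k k.2
    refine (schurComplement_apply_self_lt (H.isSymm_lapMatrix ℝ) hD k ⟨u, hu, ?_⟩).trans_le ?_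
    · rw [H.lapMatrix_apply_of_adj (by simp [H, hku.symm, hu])]
      norm_num
    · have hdeg : (H.degree k : ℝ) + #B ≤ Fintype.card V := by
        exact_mod_cast H.degree_add_card_le (B := B) (b := k) fun u hu => by simp [H, hu]
      rw [H.lapMatrix_apply_self]
      linarith
  rw [G.weightedLaplacian_eq_lapMatrix_deleteEdges_sym2 B hw]
  change -((H.lapMatrix ℝ).schurComplement (· ∈ B) i j) < _
  linarith [((H.posSemidef_lapMatrix ℝ).schurComplement hD).neg_two_mul_apply_le i j,
    hdiag i, hdiag j]

/-- **Upper bound on the substitution stresses (Lemma 2, part 2).** Let `G` be a finite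
simple graph on `n` vertices, `B` a boundary set with at least two vertices (`k = |B|`)
and nonempty complement `I`, the subgraph induced on `I` connected, and every boundary
vertex having a neighbor in `I`. For the stress that is `1` on every edge with at least
one endpoint in `I` and `0` on edges inside `B`, every substitution stress
`ω̃_ij = -(L_BB - L_BI L_II⁻¹ L_IB)_ij` (for `i ≠ j` in `B`) is less than `n - k = |I|`. -/
theorem substitution_stress_upper_bound
    {V : Type*} [Fintype V] [DecidableEq V]
    (G : SimpleGraph V) [DecidableRel G.Adj]
    (B : Finset V) (hB : 2 ≤ B.card) (hI : ∃ v, v ∉ B)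
    (hIconn : (G.induce {v : V | v ∉ B}).Connected)
    (hBnbr : ∀ b ∈ B, ∃ v, v ∉ B ∧ G.Adj b v)
    (w : V → V → ℝ)
    (hw : ∀ i j, G.Adj i j → ((i ∉ B ∨ j ∉ B) → w i j = 1) ∧ (i ∈ B → j ∈ B → w i j = 0)) :
    ∀ i j : {v : V // v ∈ B}, i ≠ j →
      -(((weightedLaplacian G w).submatrix
              (fun i : {v : V // v ∈ B} => (i : V)) (fun j : {v : V // v ∈ B} => (j : V))
            - ((weightedLaplacian G w).submatrix
                (fun i : {v : V // v ∈ B} => (i : V)) (fun j : {v : V // v ∉ B} => (j : V)))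
              * ((weightedLaplacian G w).submatrix
                  (fun i : {v : V // v ∉ B} => (i : V)) (fun j : {v : V // v ∉ B} => (j : V)))⁻¹
              * ((weightedLaplacian G w).submatrix
                  (fun i : {v : V // v ∉ B} => (i : V)) (fun j : {v : V // v ∈ B} => (j : V))))
            i j)
        < (Fintype.card V : ℝ) - B.card :=
  substitution_stress_upper_bound_general G B hIconn hBnbr w hw
end

section
/- Let ω̃_{ij} for distinct i, j ∈ {1,2,3,4} be strictly positive real numbers with ω̃_{ij} = ω̃_{ji} and ω̃_{13} ≥ ω̃_{24}. Put y₃ = ω̃_{24}/(2ω̃_{13} − ω̃_{24}) and p₁ = (0,0), p₂ = (1,0), p₃ = (2, y₃), p₄ = (0,1) in ℝ². Then 0 < y₃ ≤ 1 (so p₁, p₂, p₃, p₄ are in convex position in this cyclic order), and with the boundary stresses ω_{12} = −2ω̃_{13} − ω̃_{12}, ω_{23} = ω̃_{24} − 2ω̃_{13} − ω̃_{23}, ω_{34} = −ω̃_{24}/2 − ω̃_{34}, ω_{14} = ω̃_{24}ω̃_{13}/(ω̃_{24} − 2ω̃_{13}) − ω̃_{14}, every vertex is in equilibrium: for each i ∈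 {1,2,3,4}, Σ_{j ≠ i} ω̃_{ij}(p_i − p_j) + Σ_{j adjacent to i in the 4-cycle 1-2-3-4} ω_{ij}(p_i − p_j) = (0,0). -/
/-!
Write `a = ω̃₁₃`, `b = ω̃₂₄`. The only nonlinear fact the equilibrium equations need is
`y₃ (2a - b) = b`; granted it, each coordinate of each of the four force balances is a linear
identity in the stresses. The stress `ω₁₄` is the value `-a y₃ - ω̃₁₄` written without `y₃`.
-/

open Finset

def quadPlacement (y : ℝ) : Fin 4 → ℝ × ℝ := ![(0, 0), (1, 0), (2, y), (0, 1)]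

noncomputable def quadBoundaryStress (w : Fin 4 → Fin 4 → ℝ) (y : ℝ) : Fin 4 → ℝ :=
  ![-2 * w 0 2 - w 0 1, w 1 3 - 2 * w 0 2 - w 1 2, -(w 1 3) / 2 - w 2 3, -(w 0 2 * y) - w 0 3]

lemma div_two_mul_sub_mem_Ioc {a b : ℝ} (hb : 0 < b) (hba : b ≤ a) :
    b / (2 * a - b) ∈ Set.Ioc 0 1 := by
  have hd : 0 < 2 * a - b := by linarith
  exact ⟨div_pos hb hd, (div_le_one hd).2 (by linarith)⟩

lemma sum_filter_ne_smul_sub {ι E : Type*} [Fintype ι] [DecidableEq ι] [AddCommGroup E]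
    [Module ℝ E] (w : ι → ι → ℝ) (p : ι → E) (i : ι) :
    ∑ j ∈ univ.filter (fun j => j ≠ i), w i j • (p i - p j) = ∑ j, w i j • (p i - p j) :=
  sum_filter_of_ne fun j _ hj => by
    rintro rfl
    simp at hj

theorem quadPlacement_equilibrium (w : Fin 4 → Fin 4 → ℝ) (hsym : ∀ i j, w i j = w j i)
    {y : ℝ} (hy : y * (2 * w 0 2 - w 1 3) = w 1 3) (i : Fin 4) :
    let p := quadPlacement y
    let ov := quadBoundaryStress w y
    ∑ j, w i j • (p i - p j) + ov i • (p i - p (i + 1)) + ov (i - 1) • (p i - p (i - 1)) = 0 := by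
  fin_cases i <;>
    simp only [quadPlacement, quadBoundaryStress, Fin.sum_univ_four, Fin.isValue, Fin.zero_eta,
      Fin.mk_one, Fin.reduceFinMk, Fin.reduceAdd, Fin.reduceSub, Matrix.cons_val_zero,
      Matrix.cons_val_one, Matrix.cons_val, Prod.mk_sub_mk, Prod.smul_mk, smul_eq_mul, Prod.mk_add_mk,
      Prod.ext_iff, Prod.fst_zero, Prod.snd_zero, hsym 1 0, hsym 2 0, hsym 2 1, hsym 3 0, hsym 3 1,
      hsym 3 2]
  · exact ⟨by ring, by ring⟩
  · exact ⟨by ring, by linear_combination hy⟩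
  · exact ⟨by ring, by linear_combination (-1 / 2 : ℝ) * hy⟩
  · exact ⟨by ring, by linear_combination (-1 / 2 : ℝ) * hy⟩

/-- **Case 2 (quadrilateral outer face).** Given symmetric positive substitution stresses
`w i j` on the pairs of `{1,2,3,4}` (indexed here by `Fin 4` as `0,1,2,3`) with
`ω̃₁₃ ≥ ω̃₂₄`, the placement `p₁=(0,0), p₂=(1,0), p₃=(2,y₃), p₄=(0,1)` with
`y₃ = ω̃₂₄/(2ω̃₁₃ - ω̃₂₄)` satisfies `0 < y₃ ≤ 1`, and with the explicit boundary
stresses on the 4-cycle every vertex is in equilibrium. -/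
theorem quadrilateral_boundary_equilibrium
    (w : Fin 4 → Fin 4 → ℝ)
    (hpos : ∀ i j, i ≠ j → 0 < w i j)
    (hsym : ∀ i j, w i j = w j i)
    (h : w 1 3 ≤ w 0 2) :
    let y3 : ℝ := w 1 3 / (2 * w 0 2 - w 1 3)
    let p : Fin 4 → ℝ × ℝ := ![(0, 0), (1, 0), (2, y3), (0, 1)]
    -- boundary stresses on the cycle edges 12, 23, 34, 41:
    let ov : Fin 4 → ℝ :=
      ![-2 * w 0 2 - w 0 1,
        w 1 3 - 2 * w 0 2 - w 1 2,
        -(w 1 3) / 2 - w 2 3,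
        w 1 3 * w 0 2 / (w 1 3 - 2 * w 0 2) - w 0 3]
    (0 < y3 ∧ y3 ≤ 1) ∧
      ∀ i : Fin 4,
        (∑ j ∈ Finset.univ.filter (fun j => j ≠ i), w i j • (p i - p j))
            + ov i • (p i - p (i + 1)) + ov (i - 1) • (p i - p (i - 1)) = 0 := by
  intro y3 p ov
  have hb : 0 < w 1 3 := hpos 1 3 (by decide)
  have hy3 : y3 * (2 * w 0 2 - w 1 3) = w 1 3 := div_mul_cancel₀ _ (by linarith)
  have hov : ov = quadBoundaryStress w y3 := by
    have h14 : w 1 3 * w 0 2 / (w 1 3 - 2 * w 0 2) = -(w 0 2 * y3) := by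
      rw [← neg_sub, div_neg, mul_comm, mul_div_assoc]
    funext i
    fin_cases i <;> simp [ov, quadBoundaryStress, h14]
  refine ⟨div_two_mul_sub_mem_Ioc hb h, fun i => ?_⟩
  rw [sum_filter_ne_smul_sub, hov]
  exact quadPlacement_equilibrium w hsym hy3 i
end

section
/- Let ω̃_{ij} for distinct i, j ∈ {1,2,3,4,5} be strictly positive real numbers with ω̃_{ij} = ω̃_{ji}, ω̃_{35} ≥ ω̃_{24}, ω̃_{25} ≥ ω̃_{13}, and suppose D := ω̃_{35}ω̃_{14} + ω̃_{14}ω̃_{25} + ω̃_{25}ω̃_{24} + ω̃_{13}ω̃_{35} − ω̃_{35}ω̃_{25} > 0. Put x₅ = (ω̃_{13} − ω̃_{25} − ω̃_{24})(ω̃_{35} + ω̃_{13} − ω̃_{24})/D and y₅ = (ω̃_{35} + ω̃_{13} − ω̃_{24})/(ω̃_{35} + ω̃_{25}), and p₁ = (0,0), p₂ = (1,0), p₃ = (1,1), p₄ = (0,1), p₅ = (x₅,y₅) in ℝ². Then x₅ < 0 and 0 < y₅ < 1 (so p₁,…,p₅ form a strictly convex pentagon in this cyclic order), and there exist real boundary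 stresses ω_{12}, ω_{23}, ω_{34}, ω_{45}, ω_{15} such that every vertex is in equilibrium: for each i ∈ {1,…,5}, Σ_{j ≠ i} ω̃_{ij}(p_i − p_j) + Σ_{j adjacent to i in the 5-cycle 1-2-3-4-5} ω_{ij}(p_i − p_j) = (0,0). -/
/-!
Subtracting the weights of the cycle edges from the boundary stresses leaves only the five
diagonals to balance. At a vertex of a convex pentagon the two boundary edge vectors are
independent, so each vertex equation determines the stresses on its two boundary edges. With
`p₁, …, p₄` the unit square this gives each boundary stress by a one-line formula; `y₅` is the
condition under which vertices 2 and 3 assign the same stress to the edge `23`, `x₅` the one under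
which vertices 1 and 2 agree on `12`, and the remaining vertex equations then follow (as they must:
the total force and torque of a symmetric stress vanish).
-/

open Finset

theorem Fin.sum_filter_ne_five {M : Type*} [AddCommMonoid M] (f : Fin 5 → M) (i : Fin 5) :
    ∑ j ∈ univ.filter (· ≠ i), f j = f (i + 1) + f (i + 2) + f (i + 3) + f (i - 1) := by
  fin_cases i <;> simp [Finset.sum_filter, Fin.sum_univ_five] <;> abel

theorem sum_filter_ne_add_cycle_stress_eq_diagonal {V : Type*} [AddCommGroup V] [Module ℝ V]
    (w : Fin 5 → Fin 5 → ℝ) (hsym : ∀ i j, w i j = w j i) (p : Fin 5 → V) (σ : Fin 5 → ℝ)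
    (i : Fin 5) :
    (∑ j ∈ univ.filter (· ≠ i), w i j • (p i - p j))
        + (σ i - w i (i + 1)) • (p i - p (i + 1))
        + (σ (i - 1) - w (i - 1) (i - 1 + 1)) • (p i - p (i - 1))
      = w i (i + 2) • (p i - p (i + 2)) + w i (i + 3) • (p i - p (i + 3))
        + σ i • (p i - p (i + 1)) + σ (i - 1) • (p i - p (i - 1)) := by
  rw [Fin.sum_filter_ne_five, sub_add_cancel, hsym (i - 1) i]
  module

noncomputable def diagonalBoundaryStress (w : Fin 5 → Fin 5 → ℝ) (x y : ℝ) : Fin 5 → ℝ :=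
  ![-w 1 3 - w 1 4 * (1 - x), -w 1 3 - w 1 4 * y, -w 0 2 - w 2 4 * (1 - x),
    -(w 0 3 + w 1 3) / (1 - y), -(w 0 2 + w 0 3) / y]

theorem diagonalBoundaryStress_equilibrium {w : Fin 5 → Fin 5 → ℝ} (hsym : ∀ i j, w i j = w j i)
    {a b c d e x y : ℝ} (ha : w 0 2 = a) (hb : w 0 3 = b) (hc : w 1 3 = c) (hd : w 1 4 = d)
    (he : w 2 4 = e) (hed : e + d ≠ 0) (hy0 : y ≠ 0) (hy1 : 1 - y ≠ 0)
    (hy : y * (e + d) = e + a - c)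
    (hx : x * (e * b + b * d + d * c + a * e - e * d) = (a - d - c) * (e + a - c)) (i : Fin 5) :
    let p : Fin 5 → ℝ × ℝ := ![(0, 0), (1, 0), (1, 1), (0, 1), (x, y)]
    let σ := diagonalBoundaryStress w x y
    w i (i + 2) • (p i - p (i + 2)) + w i (i + 3) • (p i - p (i + 3))
        + σ i • (p i - p (i + 1)) + σ (i - 1) • (p i - p (i - 1)) = 0 := by
  intro p σ
  fin_cases i <;>
    simp only [p, σ, diagonalBoundaryStress, Fin.isValue, Fin.reduceFinMk, Fin.reduceAdd,
      Fin.reduceSub, Fin.zero_eta, Fin.mk_one, Matrix.cons_val, Matrix.cons_val_zero,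
      Matrix.cons_val_one, ← hsym, ha, hb, hc, hd, he, Prod.ext_iff, Prod.fst_add, Prod.snd_add,
      Prod.smul_fst, Prod.smul_snd, Prod.fst_sub, Prod.snd_sub, Prod.fst_zero, Prod.snd_zero,
      smul_eq_mul]
  · constructor
    · field_simp
      apply mul_left_cancel₀ hed
      linear_combination (c + d - a - d * x) * hy + hx
    · field_simp
      ring
  · constructor <;> ring
  · constructor
    · ring
    · linear_combination -hy
  · constructor
    · field_simp
      apply mul_left_cancel₀ hed
      linear_combination hx - (a - c + e - e * x) * hy
    · field_simp
      ring
  · constructor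
    · field_simp
      apply mul_left_cancel₀ hed
      linear_combination ((x - 1) * (d + c - a - y * (e + d)) + x * (a - c)) * hy - hx
    · field_simp
      linear_combination y * (1 - y) * hy

/-- **Case 3A (pentagonal outer face).** The vertices `1,…,5` are indexed by `Fin 5` as
`0,…,4`, so `ω̃₁₃ = w 0 2`, `ω̃₁₄ = w 0 3`, `ω̃₂₄ = w 1 3`, `ω̃₂₅ = w 1 4`,
`ω̃₃₅ = w 2 4`. Given symmetric positive substitution stresses with `ω̃₃₅ ≥ ω̃₂₄`,
`ω̃₂₅ ≥ ω̃₁₃` and positive denominator `D`, the placement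
`p₁=(0,0), p₂=(1,0), p₃=(1,1), p₄=(0,1), p₅=(x₅,y₅)` satisfies `x₅ < 0`, `0 < y₅ < 1`
(a strictly convex pentagon), and there exist boundary stresses on the 5-cycle putting
every vertex in equilibrium. -/
theorem pentagon_case3A_boundary_equilibrium
    (w : Fin 5 → Fin 5 → ℝ)
    (hpos : ∀ i j, i ≠ j → 0 < w i j)
    (hsym : ∀ i j, w i j = w j i)
    (h35 : w 1 3 ≤ w 2 4)
    (h25 : w 0 2 ≤ w 1 4)
    (hD : 0 < w 2 4 * w 0 3 + w 0 3 * w 1 4 + w 1 4 * w 1 3 + w 0 2 * w 2 4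
            - w 2 4 * w 1 4) :
    let D : ℝ := w 2 4 * w 0 3 + w 0 3 * w 1 4 + w 1 4 * w 1 3 + w 0 2 * w 2 4
            - w 2 4 * w 1 4
    let x5 : ℝ := (w 0 2 - w 1 4 - w 1 3) * (w 2 4 + w 0 2 - w 1 3) / D
    let y5 : ℝ := (w 2 4 + w 0 2 - w 1 3) / (w 2 4 + w 1 4)
    let p : Fin 5 → ℝ × ℝ := ![(0, 0), (1, 0), (1, 1), (0, 1), (x5, y5)]
    (x5 < 0 ∧ 0 < y5 ∧ y5 < 1) ∧
      ∃ ov : Fin 5 → ℝ,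
        ∀ i : Fin 5,
          (∑ j ∈ Finset.univ.filter (fun j => j ≠ i), w i j • (p i - p j))
              + ov i • (p i - p (i + 1)) + ov (i - 1) • (p i - p (i - 1)) = 0 := by
  intro D x5 y5 p
  have ha : 0 < w 0 2 := hpos 0 2 (by decide)
  have hc : 0 < w 1 3 := hpos 1 3 (by decide)
  have hed : 0 < w 2 4 + w 1 4 := add_pos (hpos 2 4 (by decide)) (hpos 1 4 (by decide))
  have hnum : 0 < w 2 4 + w 0 2 - w 1 3 := by linarith
  have hy0 : 0 < y5 := div_pos hnum hed
  have hy1 : y5 < 1 := (div_lt_one hed).mpr (by linarith)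
  have hx : x5 < 0 := div_neg_of_neg_of_pos (mul_neg_of_neg_of_pos (by linarith) hnum) hD
  refine ⟨⟨hx, hy0, hy1⟩, fun k => diagonalBoundaryStress w x5 y5 k - w k (k + 1), fun i => ?_⟩
  refine (sum_filter_ne_add_cycle_stress_eq_diagonal w hsym p _ i).trans ?_
  exact diagonalBoundaryStress_equilibrium hsym rfl rfl rfl rfl rfl hed.ne' hy0.ne'
    (sub_ne_zero.mpr hy1.ne') (div_mul_cancel₀ _ hed.ne') (div_mul_cancel₀ _ hD.ne') i
end

section
/- Let ω̃_{ij} for distinct i, j ∈ {1,2,3,4,5} be strictly positive real numbers with ω̃_{ij} = ω̃_{ji}, ω̃_{35} ≥ ω̃_{24}, ω̃_{25} ≥ ω̃_{13}, and suppose ω̃_{35}ω̃_{14} + ω̃_{14}ω̃_{25} + ω̃_{25}ω̃_{24} + ω̃_{13}ω̃_{35} ≤ ω̃_{35}ω̃_{25}. Put E := ω̃_{24}ω̃_{35} + ω̃_{25}ω̃_{13} + 2ω̃_{25}ω̃_{35}, y₂ = −2(ω̃_{24}ω̃_{13} + ω̃_{24}ω̃_{35} + ω̃_{25}ω̃_{13}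 + 2ω̃_{25}ω̃_{35} − ω̃_{13}² − 2ω̃_{13}ω̃_{35} − ω̃_{35}ω̃_{14})/E, y₃ = 2(ω̃_{24}ω̃_{13} + ω̃_{24}ω̃_{35} + ω̃_{25}ω̃_{13} + 2ω̃_{25}ω̃_{35} − ω̃_{24}² − 2ω̃_{24}ω̃_{25} − ω̃_{14}ω̃_{25})/E, and p₁ = (0,−1), p₂ = (1,y₂), p₃ = (1,y₃), p₄ = (0,1), p₅ = (−1,0) in ℝ². Then −2 < y₂ < y₃ < 2 (so p₁,…,p₅ form a strictly convex pentagon in this cyclic order), and there exist real boundary stresses ω_{12}, ω_{23}, ω_{34}, ω_{45}, ω_{15} such that every vertex is in equilibrium: for each i ∈ {1,…,5}, Σ_{j ≠ i} ω̃_{ij}(p_i − p_j) + Σ_{j adjacent to i in the 5-cycle 1-2-3-4-5} ω_{ij}(p_i − p_j) = (0,0). -/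
open Finset

/-!
Once the interior stresses on the five sides are absorbed into the unknown side stresses, only the
diagonal stresses remain. The `x`-components of the equilibrium equations then fix four of the
five side stresses, the `y`-component at vertex 2 fixes the stress on the vertical side `23`,
and the `y`-components at vertices 1 and 4 become a linear system in `y₂ + 2` and `2 - y₃` of
determinant `2E`, whose Cramer solution is the given placement; the remaining equations are
consequences of these. Solving the system gives `E (y₂ + 2)` and `E (2 - y₃)` as visibly
positive expressions, and the case hypothesis bounds their sum by `4E`, i.e. `y₂ < y₃`.
-/

theorem sum_filter_ne_fin_five {M : Type*} [AddCommMonoid M] (f : Fin 5 → M) (i : Fin 5) :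
    ∑ j ∈ univ.filter (· ≠ i), f j = f (i + 1) + f (i + 2) + f (i - 2) + f (i - 1) := by
  fin_cases i <;> simp [sum_filter, Fin.sum_univ_five] <;> abel

/-- `s k` is the stress on the side `{k, k + 1}` and `δ k` the stress on the diagonal
`{k, k + 2}`. -/
def pentagonForce {M : Type*} [AddCommGroup M] [Module ℝ M] (p : Fin 5 → M) (s δ : Fin 5 → ℝ)
    (i : Fin 5) : M :=
  s i • (p i - p (i + 1)) + s (i - 1) • (p i - p (i - 1)) + δ i • (p i - p (i + 2))
    + δ (i - 2) • (p i - p (i - 2))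

theorem equilibrium_sum_eq_pentagonForce {M : Type*} [AddCommGroup M] [Module ℝ M]
    (w : Fin 5 → Fin 5 → ℝ) (hsym : ∀ i j, w i j = w j i) (p : Fin 5 → M) (s : Fin 5 → ℝ)
    (i : Fin 5) :
    (∑ j ∈ univ.filter (· ≠ i), w i j • (p i - p j)) + (s i - w i (i + 1)) • (p i - p (i + 1))
        + (s (i - 1) - w (i - 1) (i - 1 + 1)) • (p i - p (i - 1))
      = pentagonForce p s (fun k => w k (k + 2)) i := by
  rw [sum_filter_ne_fin_five, pentagonForce, sub_add_cancel, sub_add_cancel, hsym i (i - 2),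
    hsym (i - 1) i, sub_smul, sub_smul]
  abel

section Case3B

-- `a, b, c, d, e` stand for `ω̃₁₃, ω̃₁₄, ω̃₂₄, ω̃₂₅, ω̃₃₅`, the stresses on the diagonals.
variable {a b c d e y₂ y₃ : ℝ}

theorem case3B_heights_solve_system (hE : c * e + d * a + 2 * d * e ≠ 0)
    (hy₂ : y₂ = -2 * (c * a + c * e + d * a + 2 * d * e - a ^ 2 - 2 * a * e - e * b)
      / (c * e + d * a + 2 * d * e))
    (hy₃ : y₃ = 2 * (c * a + c * e + d * a + 2 * d * e - c ^ 2 - 2 * c * d - b * d)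
      / (c * e + d * a + 2 * d * e)) :
    (c + 2 * d) * (y₂ + 2) + a * (2 - y₃) = 4 * a + 2 * b ∧
      c * (y₂ + 2) + (a + 2 * e) * (2 - y₃) = 4 * c + 2 * b := by
  have k₂ := div_mul_cancel₀
    (-2 * (c * a + c * e + d * a + 2 * d * e - a ^ 2 - 2 * a * e - e * b)) hE
  have k₃ := div_mul_cancel₀
    (2 * (c * a + c * e + d * a + 2 * d * e - c ^ 2 - 2 * c * d - b * d)) hE
  rw [← hy₂] at k₂
  rw [← hy₃] at k₃
  constructor <;> apply mul_left_cancel₀ hE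
  · linear_combination (c + 2 * d) * k₂ - a * k₃
  · linear_combination c * k₂ - (a + 2 * e) * k₃

theorem case3B_heights_bounds (h₁ : (c + 2 * d) * (y₂ + 2) + a * (2 - y₃) = 4 * a + 2 * b)
    (h₂ : c * (y₂ + 2) + (a + 2 * e) * (2 - y₃) = 4 * c + 2 * b)
    (ha : 0 < a) (hb : 0 < b) (hc : 0 < c) (hd : 0 < d)
    (he : 0 < e) (hce : c ≤ e) (had : a ≤ d)
    (hcase : e * b + b * d + d * c + a * e ≤ e * d) :
    -2 < y₂ ∧ y₂ < y₃ ∧ y₃ < 2 := by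
  have hE : 0 < c * e + d * a + 2 * d * e := by positivity
  have hgap₂ : (c * e + d * a + 2 * d * e) * (y₂ + 2) = 2 * (a * (a + 2 * e - c) + b * e) := by
    linear_combination (a + 2 * e) / 2 * h₁ - a / 2 * h₂
  have hgap₃ : (c * e + d * a + 2 * d * e) * (2 - y₃) = 2 * (c * (c + 2 * d - a) + b * d) := by
    linear_combination (c + 2 * d) / 2 * h₂ - c / 2 * h₁
  have hgaps_lt : a * (a + 2 * e - c) + b * e + c * (c + 2 * d - a) + b * d
      < 2 * (c * e + d * a + 2 * d * e) := by
    nlinarith [mul_le_mul_of_nonneg_left hce hc.le]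
  have hdiff : (c * e + d * a + 2 * d * e) * (y₃ - y₂) = 4 * (c * e + d * a + 2 * d * e)
      - (c * e + d * a + 2 * d * e) * (y₂ + 2) - (c * e + d * a + 2 * d * e) * (2 - y₃) := by
    ring
  have hpos₂ : 0 < y₂ + 2 := pos_of_mul_pos_right (by
    rw [hgap₂]; exact mul_pos two_pos (add_pos (mul_pos ha (by linarith)) (mul_pos hb he))) hE.le
  have hpos₃ : 0 < 2 - y₃ := pos_of_mul_pos_right (by
    rw [hgap₃]; exact mul_pos two_pos (add_pos (mul_pos hc (by linarith)) (mul_pos hb hd))) hE.le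
  have hpos₂₃ : 0 < y₃ - y₂ := pos_of_mul_pos_right (by
    rw [hdiff, hgap₂, hgap₃]; linarith) hE.le
  exact ⟨by linarith, by linarith, by linarith⟩

theorem exists_case3B_side_stresses (h₁ : (c + 2 * d) * (y₂ + 2) + a * (2 - y₃) = 4 * a + 2 * b)
    (h₂ : c * (y₂ + 2) + (a + 2 * e) * (2 - y₃) = 4 * c + 2 * b)
    (hne : y₂ ≠ y₃) :
    ∃ s : Fin 5 → ℝ, ∀ i, pentagonForce ![((0 : ℝ), (-1 : ℝ)), (1, y₂), (1, y₃), (0, 1), (-1, 0)]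
      s ![a, c, e, b, d] i = 0 := by
  obtain ⟨t, ht⟩ : ∃ t, t * (y₂ - y₃) = d * y₂ + 2 * c + 2 * d :=
    ⟨_, div_mul_cancel₀ _ (sub_ne_zero.2 hne)⟩
  refine ⟨![-(c + 2 * d), t, -(a + 2 * e), c - a - 2 * e, a - c - 2 * d], fun i => ?_⟩
  fin_cases i <;> simp [pentagonForce, Prod.ext_iff]
  · linear_combination h₁
  · exact ⟨by ring, by linear_combination ht⟩
  · exact ⟨by ring, by linear_combination -ht - (h₁ - h₂) / 2⟩
  · linear_combination -h₂
  · exact ⟨by ring, by linear_combination -(h₁ - h₂) / 2⟩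

end Case3B

/-- **Case 3B (pentagonal outer face).** The vertices `1,…,5` are indexed by `Fin 5` as
`0,…,4`, so `ω̃₁₃ = w 0 2`, `ω̃₁₄ = w 0 3`, `ω̃₂₄ = w 1 3`, `ω̃₂₅ = w 1 4`,
`ω̃₃₅ = w 2 4`. Given symmetric positive substitution stresses with `ω̃₃₅ ≥ ω̃₂₄`,
`ω̃₂₅ ≥ ω̃₁₃` and `ω̃₃₅ω̃₁₄ + ω̃₁₄ω̃₂₅ + ω̃₂₅ω̃₂₄ + ω̃₁₃ω̃₃₅ ≤ ω̃₃₅ω̃₂₅`, the placement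
`p₁=(0,-1), p₂=(1,y₂), p₃=(1,y₃), p₄=(0,1), p₅=(-1,0)` satisfies `-2 < y₂ < y₃ < 2`
(a strictly convex pentagon), and there exist boundary stresses on the 5-cycle putting
every vertex in equilibrium. -/
theorem pentagon_case3B_boundary_equilibrium
    (w : Fin 5 → Fin 5 → ℝ)
    (hpos : ∀ i j, i ≠ j → 0 < w i j)
    (hsym : ∀ i j, w i j = w j i)
    (h35 : w 1 3 ≤ w 2 4)
    (h25 : w 0 2 ≤ w 1 4)
    (hcase : w 2 4 * w 0 3 + w 0 3 * w 1 4 + w 1 4 * w 1 3 + w 0 2 * w 2 4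
              ≤ w 2 4 * w 1 4) :
    let E : ℝ := w 1 3 * w 2 4 + w 1 4 * w 0 2 + 2 * w 1 4 * w 2 4
    let y2 : ℝ := -2 * (w 1 3 * w 0 2 + w 1 3 * w 2 4 + w 1 4 * w 0 2
        + 2 * w 1 4 * w 2 4 - (w 0 2) ^ 2 - 2 * w 0 2 * w 2 4 - w 2 4 * w 0 3) / E
    let y3 : ℝ := 2 * (w 1 3 * w 0 2 + w 1 3 * w 2 4 + w 1 4 * w 0 2
        + 2 * w 1 4 * w 2 4 - (w 1 3) ^ 2 - 2 * w 1 3 * w 1 4 - w 0 3 * w 1 4) / E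
    let p : Fin 5 → ℝ × ℝ := ![(0, -1), (1, y2), (1, y3), (0, 1), (-1, 0)]
    (-2 < y2 ∧ y2 < y3 ∧ y3 < 2) ∧
      ∃ ov : Fin 5 → ℝ,
        ∀ i : Fin 5,
          (∑ j ∈ Finset.univ.filter (fun j => j ≠ i), w i j • (p i - p j))
              + ov i • (p i - p (i + 1)) + ov (i - 1) • (p i - p (i - 1)) = 0 := by
  intro E y2 y3 p
  have ha := hpos 0 2 (by decide)
  have hb := hpos 0 3 (by decide)
  have hc := hpos 1 3 (by decide)
  have hd := hpos 1 4 (by decide)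
  have he := hpos 2 4 (by decide)
  have hE : E ≠ 0 := by positivity
  obtain ⟨h₁, h₂⟩ := case3B_heights_solve_system hE rfl rfl
  have hbounds := case3B_heights_bounds h₁ h₂ ha hb hc hd he h35 h25 hcase
  obtain ⟨s, hs⟩ := exists_case3B_side_stresses h₁ h₂ hbounds.2.1.ne
  have hδ : (fun k : Fin 5 => w k (k + 2)) = ![w 0 2, w 1 3, w 2 4, w 0 3, w 1 4] := by
    funext k
    fin_cases k <;> simp [hsym 3 0, hsym 4 1]
  refine ⟨hbounds, fun k => s k - w k (k + 1), fun i => ?_⟩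
  rw [equilibrium_sum_eq_pentagonForce w hsym p s i, hδ]
  exact hs i
end

section
/- For every symmetric real-valued function ω on unordered pairs of distinct elements of {1,2,3,4,5}, there exists a permutation σ of {1,2,3,4,5} belonging to the dihedral group of the 5-cycle 1-2-3-4-5 (i.e., σ maps cyclically adjacent labels to cyclically adjacent labels) such that ω(σ(3),σ(5)) ≥ ω(σ(2),σ(4)) and ω(σ(2),σ(5)) ≥ ω(σ(1),σ(3)). -/
/-!
Index the diagonals by `d i = w i (i + 2)` and let `m` maximise `d`. In the rotation
`i ↦ i + (m - 2)` both required inequalities become `d (m - 1) ≤ d m` and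
`d (m - 2) ≤ d (m + 2)`; in the reflection `i ↦ (m - 1) - i` they become `d (m + 1) ≤ d m`
and `d (m + 2) ≤ d (m - 2)`. Maximality of `d m` gives the first inequality in both cases,
and one of the two second inequalities always holds.
-/

namespace Pentagon

variable (w : Fin 5 → Fin 5 → ℝ)

def diagonalWeight (i : Fin 5) : ℝ := w i (i + 2)

def PreservesAdjacency (σ : Equiv.Perm (Fin 5)) : Prop :=
  ∀ i : Fin 5, σ (i + 1) = σ i + 1 ∨ σ (i + 1) = σ i - 1

def OrdersDiagonals (σ : Equiv.Perm (Fin 5)) : Prop :=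
  w (σ 1) (σ 3) ≤ w (σ 2) (σ 4) ∧ w (σ 0) (σ 2) ≤ w (σ 1) (σ 4)

theorem preservesAdjacency_addRight (c : Fin 5) : PreservesAdjacency (Equiv.addRight c) :=
  fun i => .inl (add_right_comm i 1 c)

theorem preservesAdjacency_subLeft (a : Fin 5) : PreservesAdjacency (Equiv.subLeft a) :=
  fun i => .inr (sub_add_eq_sub_sub a i 1)

variable {w}

theorem ordersDiagonals_addRight (hsym : ∀ i j, w i j = w j i) {m : Fin 5}
    (h₁ : diagonalWeight w (m - 1) ≤ diagonalWeight w m)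
    (h₂ : diagonalWeight w (m - 2) ≤ diagonalWeight w (m + 2)) :
    OrdersDiagonals w (Equiv.addRight (m - 2)) := by
  simp only [OrdersDiagonals, diagonalWeight, Equiv.coe_addRight] at *
  refine ⟨?_, ?_⟩
  · convert h₁ using 2 <;> grind
  · rw [hsym (1 + _)]
    convert h₂ using 2 <;> grind

theorem ordersDiagonals_subLeft (hsym : ∀ i j, w i j = w j i) {m : Fin 5}
    (h₁ : diagonalWeight w (m + 1) ≤ diagonalWeight w m)
    (h₂ : diagonalWeight w (m + 2) ≤ diagonalWeight w (m - 2)) :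
    OrdersDiagonals w (Equiv.subLeft (m - 1)) := by
  simp only [OrdersDiagonals, diagonalWeight, Equiv.subLeft_apply] at *
  refine ⟨?_, ?_⟩
  · rw [hsym (m - 1 - 1), hsym (m - 1 - 2)]
    convert h₁ using 2 <;> grind
  · rw [hsym (m - 1 - 0)]
    convert h₂ using 2 <;> grind

end Pentagon

open Pentagon in
/-- Labels `1,…,5` are `0,…,4`. -/
theorem pentagon_relabeling
    (w : Fin 5 → Fin 5 → ℝ) (hsym : ∀ i j, w i j = w j i) :
    ∃ σ : Equiv.Perm (Fin 5),
      (∀ i : Fin 5, σ (i + 1) = σ i + 1 ∨ σ (i + 1) = σ i - 1) ∧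
      w (σ 1) (σ 3) ≤ w (σ 2) (σ 4) ∧
      w (σ 0) (σ 2) ≤ w (σ 1) (σ 4) := by
  obtain ⟨m, hm⟩ := Finite.exists_max (diagonalWeight w)
  rcases le_total (diagonalWeight w (m - 2)) (diagonalWeight w (m + 2)) with h | h
  · exact ⟨_, preservesAdjacency_addRight _, ordersDiagonals_addRight hsym (hm _) h⟩
  · exact ⟨_, preservesAdjacency_subLeft _, ordersDiagonals_subLeft hsym (hm _) h⟩
end

section
/- Let G be a finite connected simple graph and let B be the vertex set of a cycle in G, i.e., B = {b₁,…,b_k} with k ≥ 3 distinct vertices such that b₁b₂, b₂b₃, …, b_{k−1}b_k, b_kb₁ are all edges of G. Then the number of spanning B-forests of G is strictly less than the number of spanning trees of G: F_B(G) < T(G). -/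
open SimpleGraph

/-- The edge set `s ⊆ E(G)` spans a tree: the graph on `V` with edge set `s` is
connected and acyclic. -/
def IsSpanningTreeEdgeSet {V : Type*} (G : SimpleGraph V) (s : Set (Sym2 V)) : Prop :=
  s ⊆ G.edgeSet ∧ (SimpleGraph.fromEdgeSet s).Connected ∧
    (SimpleGraph.fromEdgeSet s).IsAcyclic

/-- The edge set `s ⊆ E(G)` spans a `B`-forest: the graph on `V` with edge set `s` is a
forest with exactly `|B|` connected components, each of which contains exactly one
vertex of `B`. -/
def IsSpanningBForestEdgeSet {V : Type*} (G : SimpleGraph V) (B : Set V)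
    (s : Set (Sym2 V)) : Prop :=
  s ⊆ G.edgeSet ∧ (SimpleGraph.fromEdgeSet s).IsAcyclic ∧
    Nat.card (SimpleGraph.fromEdgeSet s).ConnectedComponent = B.ncard ∧
    ∀ c : (SimpleGraph.fromEdgeSet s).ConnectedComponent,
      ∃! v, v ∈ B ∧ (SimpleGraph.fromEdgeSet s).connectedComponentMk v = c

/-!
Label every vertex by the index `i` of the cycle vertex `bᵢ` in its component of a spanning
`B`-forest `F`. Adding the path edges `b₀b₁, …, b_{k-2}b_{k-1}` joins the `k` components of `F`
into a spanning tree: at the `n`-th step, `max(label, n)` is invariant along the edges present,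
so `bₙ` and `bₙ₊₁` are not yet connected. No path edge lies in `F` (its ends carry different
labels), so `F ↦ F ∪ path` is injective. Every edge of the resulting tree joins equal or
consecutive labels, so the closing edge `b_{k-1}b₀` (labels `k - 1` and `0`, with `k ≥ 3`) is
never in it, while some spanning tree of `G` contains it.
-/

namespace SimpleGraph

variable {V : Type*}

theorem Reachable.eq_of_forall_adj_eq {α : Type*} {G : SimpleGraph V} {f : V → α}
    (hf : ∀ x y, G.Adj x y → f x = f y) {u v : V} (h : G.Reachable u v) : f u = f v := by
  rw [reachable_iff_reflTransGen] at h
  induction h with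
  | refl => rfl
  | tail _ hadj ih => exact ih.trans (hf _ _ hadj)

end SimpleGraph

section ChainEdges

variable {V : Type*}

def chainEdges (c : ℕ → V) (n : ℕ) : Set (Sym2 V) := {e | ∃ i < n, e = s(c i, c (i + 1))}

@[simp]
theorem chainEdges_zero (c : ℕ → V) : chainEdges c 0 = ∅ := by
  simp [chainEdges]

theorem chainEdges_succ (c : ℕ → V) (n : ℕ) :
    chainEdges c (n + 1) = insert s(c n, c (n + 1)) (chainEdges c n) := by
  ext e
  simp only [chainEdges, Set.mem_insert_iff, Set.mem_ofPred_eq, Nat.lt_succ_iff_lt_or_eq]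
  grind

variable {c : ℕ → V} {s : Set (Sym2 V)} {n : ℕ}

theorem fromEdgeSet_union_chainEdges_succ :
    fromEdgeSet (s ∪ chainEdges c (n + 1)) =
      fromEdgeSet (s ∪ chainEdges c n) ⊔ edge (c n) (c (n + 1)) := by
  rw [chainEdges_succ, Set.union_insert, Set.insert_eq, fromEdgeSet_union, sup_comm]
  rfl

theorem reachable_fromEdgeSet_chainEdges {i : ℕ} (hi : i ≤ n) :
    (fromEdgeSet (chainEdges c n)).Reachable (c 0) (c i) := by
  induction i with
  | zero => rfl
  | succ i ih =>
    refine (ih (by omega)).trans ?_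
    by_cases h : c i = c (i + 1)
    · rw [h]
    · exact Adj.reachable ((fromEdgeSet_adj _).mpr ⟨⟨i, by omega, rfl⟩, h⟩)

theorem connected_fromEdgeSet_union_chainEdges
    (hreach : ∀ x, ∃ i ≤ n, (fromEdgeSet s).Reachable x (c i)) :
    (fromEdgeSet (s ∪ chainEdges c n)).Connected := by
  refine (connected_iff_exists_forall_reachable _).mpr ⟨c 0, fun x => ?_⟩
  obtain ⟨i, hi, hx⟩ := hreach x
  exact ((reachable_fromEdgeSet_chainEdges hi).mono (fromEdgeSet_mono Set.subset_union_right)).trans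
    (hx.mono (fromEdgeSet_mono Set.subset_union_left)).symm

variable {ℓ : V → ℕ}

theorem label_of_mem_union_chainEdges (hℓ : ∀ x y, s(x, y) ∈ s → ℓ x = ℓ y) (hc : ∀ i ≤ n, ℓ (c i) = i) {x y : V}
    (h : s(x, y) ∈ s ∪ chainEdges c n) :
    ℓ x = ℓ y ∨ max (ℓ x) (ℓ y) ≤ n ∧ (ℓ x + 1 = ℓ y ∨ ℓ y + 1 = ℓ x) := by
  rcases h with h | ⟨i, hi, he⟩
  · exact Or.inl (hℓ x y h)
  · have := hc i (by omega)
    have := hc (i + 1) hi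
    rcases Sym2.eq_iff.mp he with ⟨rfl, rfl⟩ | ⟨rfl, rfl⟩ <;> omega

theorem isAcyclic_fromEdgeSet_union_chainEdges (hℓ : ∀ x y, s(x, y) ∈ s → ℓ x = ℓ y)
    (hs : (fromEdgeSet s).IsAcyclic) :
    ∀ n, (∀ i ≤ n, ℓ (c i) = i) → (fromEdgeSet (s ∪ chainEdges c n)).IsAcyclic
  | 0, _ => by simpa using hs
  | n + 1, hc => by
    rw [fromEdgeSet_union_chainEdges_succ]
    refine (isAcyclic_fromEdgeSet_union_chainEdges hℓ hs n fun i hi => hc i (by omega))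
      |>.sup_edge_of_not_reachable fun hr => ?_
    have := hr.eq_of_forall_adj_eq (f := fun x => max (ℓ x) n) fun x y hxy => by
      have := label_of_mem_union_chainEdges hℓ (fun i hi => hc i (by omega))
        ((fromEdgeSet_adj _).mp hxy).1
      omega
    have := hc n (by omega)
    have := hc (n + 1) le_rfl
    simp_all

end ChainEdges

section BForest

variable {V : Type*} {G : SimpleGraph V} {s : Set (Sym2 V)}

theorem IsSpanningBForestEdgeSet.exists_labelling {ι : Type*} {b : ι → V}
    (hb : Function.Injective b) (hs : IsSpanningBForestEdgeSet G (Set.range b) s) :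
    ∃ φ : V → ι, (∀ x, (fromEdgeSet s).Reachable x (b (φ x))) ∧ (∀ i, φ (b i) = i) ∧
      ∀ x y, s(x, y) ∈ s → φ x = φ y := by
  obtain ⟨-, -, -, hcomp⟩ := hs
  have hrep : ∀ x, ∃ i, (fromEdgeSet s).Reachable x (b i) := fun x => by
    obtain ⟨-, ⟨⟨i, rfl⟩, hi⟩, -⟩ := hcomp ((fromEdgeSet s).connectedComponentMk x)
    exact ⟨i, (ConnectedComponent.eq.mp hi).symm⟩
  have huniq : ∀ i j, (fromEdgeSet s).Reachable (b i) (b j) → i = j := fun i j h => by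
    obtain ⟨v, -, hv⟩ := hcomp ((fromEdgeSet s).connectedComponentMk (b j))
    exact hb ((hv _ ⟨⟨i, rfl⟩, ConnectedComponent.sound h⟩).trans (hv _ ⟨⟨j, rfl⟩, rfl⟩).symm)
  choose φ hφ using hrep
  refine ⟨φ, hφ, fun i => huniq _ _ (hφ (b i)).symm, fun x y hxy => ?_⟩
  by_cases hne : x = y
  · rw [hne]
  · exact huniq _ _ (((hφ x).symm.trans (Adj.reachable ((fromEdgeSet_adj _).mpr ⟨hxy, hne⟩))).trans
      (hφ y))

open Fin.NatCast

variable {k : ℕ} [NeZero k] {b : Fin k → V}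

theorem IsSpanningBForestEdgeSet.exists_natLabelling (hb : Function.Injective b)
    (hs : IsSpanningBForestEdgeSet G (Set.range b) s) :
    ∃ ℓ : V → ℕ, (∀ x y, s(x, y) ∈ s → ℓ x = ℓ y) ∧ (∀ i ≤ k - 1, ℓ (b i) = i) ∧
      ∀ x, ∃ i ≤ k - 1, (fromEdgeSet s).Reachable x (b i) := by
  obtain ⟨φ, hreach, hφb, hφs⟩ := hs.exists_labelling hb
  refine ⟨fun x => φ x, fun x y h => congrArg Fin.val (hφs x y h), fun i hi => ?_, fun x => ?_⟩
  · show (φ (b i) : ℕ) = i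
    rw [hφb, Fin.val_natCast, Nat.mod_eq_of_lt (Nat.lt_of_le_sub_one (NeZero.pos k) hi)]
  · exact ⟨φ x, Nat.le_sub_one_of_lt (φ x).isLt, by simpa using hreach x⟩

theorem IsSpanningBForestEdgeSet.isSpanningTreeEdgeSet_union_chainEdges
    (hb : Function.Injective b) (hadj : ∀ i : ℕ, G.Adj (b i) (b ↑(i + 1)))
    (hs : IsSpanningBForestEdgeSet G (Set.range b) s) :
    IsSpanningTreeEdgeSet G (s ∪ chainEdges (fun i : ℕ => b i) (k - 1)) := by
  obtain ⟨ℓ, hℓ, hℓb, hreach⟩ := hs.exists_natLabelling hb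
  refine ⟨?_, connected_fromEdgeSet_union_chainEdges hreach,
    isAcyclic_fromEdgeSet_union_chainEdges hℓ hs.2.1 _ hℓb⟩
  rintro e (he | ⟨i, -, rfl⟩)
  · exact hs.1 he
  · exact hadj i

theorem IsSpanningBForestEdgeSet.disjoint_chainEdges (hb : Function.Injective b)
    (hs : IsSpanningBForestEdgeSet G (Set.range b) s) :
    Disjoint s (chainEdges (fun i : ℕ => b i) (k - 1)) := by
  obtain ⟨ℓ, hℓ, hℓb, -⟩ := hs.exists_natLabelling hb
  refine Set.disjoint_left.mpr fun e he ⟨i, hi, hei⟩ => ?_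
  have := hℓ _ _ (hei ▸ he)
  rw [hℓb i (by omega), hℓb (i + 1) (by omega)] at this
  omega

theorem IsSpanningBForestEdgeSet.closingEdge_notMem_union_chainEdges (hk : 3 ≤ k)
    (hb : Function.Injective b) (hs : IsSpanningBForestEdgeSet G (Set.range b) s) :
    s(b ↑(k - 1), b 0) ∉ s ∪ chainEdges (fun i : ℕ => b i) (k - 1) := by
  obtain ⟨ℓ, hℓ, hℓb, -⟩ := hs.exists_natLabelling hb
  intro h
  have := label_of_mem_union_chainEdges hℓ hℓb h
  rw [hℓb (k - 1) le_rfl, ← Nat.cast_zero, hℓb 0 (Nat.zero_le _)] at this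
  omega

theorem isSpanningTreeEdgeSet_edgeSet {T : SimpleGraph V} (hTG : T ≤ G) (hT : T.IsTree) :
    IsSpanningTreeEdgeSet G T.edgeSet := by
  rw [IsSpanningTreeEdgeSet, fromEdgeSet_edgeSet]
  exact ⟨edgeSet_mono hTG, hT.connected, hT.isAcyclic⟩

end BForest

/-- **Lemma 9.** If `B` is the vertex set of a cycle in a finite connected simple graph
`G`, then the number of spanning `B`-forests of `G` is strictly smaller than the number
of spanning trees of `G`. -/
theorem spanning_B_forests_lt_spanning_trees
    {V : Type*} [Fintype V]
    (G : SimpleGraph V) (hconn : G.Connected)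
    (k : ℕ) (hk : 3 ≤ k) (b : Fin k → V) (hinj : Function.Injective b)
    (hcycle : ∀ i : Fin k, G.Adj (b i) (b (i + ⟨1, by omega⟩))) :
    {s : Set (Sym2 V) | IsSpanningBForestEdgeSet G (Set.range b) s}.ncard
      < {s : Set (Sym2 V) | IsSpanningTreeEdgeSet G s}.ncard := by
  open Fin.NatCast in
  have : NeZero k := ⟨by omega⟩
  have hadj : ∀ i : ℕ, G.Adj (b i) (b ↑(i + 1)) := fun i => by
    convert hcycle i using 3
    ext
    simp [Fin.val_add, Nat.mod_eq_of_lt (by omega : 1 < k)]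
  have hclose : G.Adj (b ↑(k - 1)) (b 0) := by
    simpa [Nat.sub_add_cancel (by omega : 1 ≤ k)] using hadj (k - 1)
  set P := chainEdges (fun i : ℕ => b i) (k - 1)
  set forests := {s : Set (Sym2 V) | IsSpanningBForestEdgeSet G (Set.range b) s}
  have hinjOn : Set.InjOn (· ∪ P) forests := fun s₁ h₁ s₂ h₂ (h : s₁ ∪ P = s₂ ∪ P) => by
    rw [← (h₁.disjoint_chainEdges hinj).sdiff_eq_left, ← (h₂.disjoint_chainEdges hinj).sdiff_eq_left,
      ← Set.union_sdiff_right, h, Set.union_sdiff_right]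
  have hne : b ↑(k - 1) ≠ b 0 := fun h => by
    have := congrArg Fin.val (hinj h)
    rw [Fin.val_natCast, Nat.mod_eq_of_lt (by omega), Fin.val_zero] at this
    omega
  obtain ⟨T, hcloseT, hTG, hT⟩ := hconn.exists_isTree_le_of_le_of_isAcyclic
    ((edge_le_iff (G := G)).mpr (Or.inr hclose))
    (by simpa using isAcyclic_bot.sup_edge_of_not_reachable (reachable_bot.not.mpr hne))
  have hT_notMem : T.edgeSet ∉ (· ∪ P) '' forests := by
    rintro ⟨s, hs, hsT : s ∪ P = T.edgeSet⟩
    refine hs.closingEdge_notMem_union_chainEdges hk hinj ?_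
    rw [show _ ∪ _ = s ∪ P from rfl, hsT, mem_edgeSet]
    exact ((edge_le_iff (G := T)).mp hcloseT).resolve_left hne
  calc forests.ncard = ((· ∪ P) '' forests).ncard := hinjOn.ncard_image.symm
    _ < _ := Set.ncard_lt_ncard <| (Set.ssubset_iff_of_subset
      (Set.MapsTo.image_subset fun s hs => hs.isSpanningTreeEdgeSet_union_chainEdges hinj hadj)).mpr
      ⟨T.edgeSet, isSpanningTreeEdgeSet_edgeSet hTG hT, hT_notMem⟩
end

section
/- For every finite connected simple graph G with at least 3 vertices, the number of spanning trees of G is strictly less than the product of the degrees of all vertices: T(G) < Π_{v ∈ V(G)} deg(v). -/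
open SimpleGraph BigOperators

/-!
Root the spanning trees at a vertex `r` of degree at least two, which exists as soon as
the graph is connected with at least three vertices. A tree is determined by the map sending
each vertex `v ≠ r` to its parent, the next vertex on the path from `v` to `r`, and the parent
of `v` is a neighbour of `v` in `G`. Hence there are at most `∏_{v ≠ r} deg v` spanning trees,
which is strictly less than `deg r · ∏_{v ≠ r} deg v` because all degrees are positive.
-/

namespace SimpleGraph

variable {V : Type*}

lemma Connected.exists_two_le_degree [Fintype V] {G : SimpleGraph V} [DecidableRel G.Adj]
    (hG : G.Connected) (hV : 3 ≤ Fintype.card V) : ∃ v, 2 ≤ G.degree v := by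
  -- Otherwise `2 (n - 1) ≤ 2 |E| = ∑ deg ≤ n`.
  by_contra! hdeg
  have hsum : ∑ v, G.degree v ≤ Fintype.card V := by
    simpa using Finset.sum_le_sum fun v (_ : v ∈ Finset.univ) => Nat.le_of_lt_succ (hdeg v)
  have hedges := hG.card_vert_le_card_edgeSet_add_one
  rw [Nat.card_eq_fintype_card, Nat.card_eq_fintype_card, ← edgeFinset_card] at hedges
  rw [sum_degrees_eq_twice_card_edges] at hsum
  omega

namespace IsTree

variable {T T' : SimpleGraph V}

noncomputable def parent (hT : T.IsTree) (r v : V) : V :=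
  (hT.existsUnique_path v r).exists.choose.snd

lemma parent_eq_snd (hT : T.IsTree) {r v : V} {p : T.Walk v r} (hp : p.IsPath) :
    hT.parent r v = p.snd := by
  rw [parent, (hT.existsUnique_path v r).unique (hT.existsUnique_path v r).exists.choose_spec hp]

lemma adj_parent (hT : T.IsTree) {r v : V} (hv : v ≠ r) : T.Adj v (hT.parent r v) := by
  obtain ⟨p, hp⟩ := (hT.existsUnique_path v r).exists
  rw [hT.parent_eq_snd hp]
  exact p.adj_snd (Walk.not_nil_of_ne hv)

lemma parent_eq_or_parent_eq_of_adj (hT : T.IsTree) (r : V) {a b : V} (hab : T.Adj a b) :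
    (a ≠ r ∧ hT.parent r a = b) ∨ (b ≠ r ∧ hT.parent r b = a) := by
  obtain ⟨p, hp⟩ := (hT.existsUnique_path a r).exists
  by_cases hb : b ∈ p.support
  · have hsnd := hT.isAcyclic.eq_snd_of_adj_start hp hab hb
    refine Or.inl ⟨?_, (hT.parent_eq_snd hp).trans hsnd.symm⟩
    rintro rfl
    rw [Walk.eq_nil_iff_nil.mpr (Walk.isPath_iff_nil.mp hp)] at hsnd
    exact hab.ne' hsnd
  · refine Or.inr ⟨fun hbr => hb (hbr ▸ p.end_mem_support), ?_⟩
    rw [hT.parent_eq_snd (p := p.cons hab.symm) (hp.cons hb), Walk.snd_cons]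

lemma edgeSet_eq_range_parent (hT : T.IsTree) (r : V) :
    T.edgeSet = Set.range fun v : {v // v ≠ r} => s(v.1, hT.parent r v) := by
  ext ⟨a, b⟩
  refine ⟨fun hab => ?_, ?_⟩
  · rcases hT.parent_eq_or_parent_eq_of_adj r (a := a) (b := b) hab with ⟨ha, rfl⟩ | ⟨hb, rfl⟩
    · exact ⟨⟨a, ha⟩, rfl⟩
    · exact ⟨⟨b, hb⟩, Sym2.eq_swap⟩
  · rintro ⟨v, hv⟩
    rw [← hv]
    exact hT.adj_parent v.2

lemma eq_of_parent_eq (hT : T.IsTree) (hT' : T'.IsTree) {r : V}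
    (h : ∀ v, v ≠ r → hT.parent r v = hT'.parent r v) : T = T' := by
  rw [← edgeSet_inj, hT.edgeSet_eq_range_parent r, hT'.edgeSet_eq_range_parent r]
  congr 1
  funext v
  rw [h v v.2]

end IsTree

end SimpleGraph

namespace IsSpanningTreeEdgeSet

variable {V : Type*} {G : SimpleGraph V} {s : Set (Sym2 V)}

lemma isTree (hs : IsSpanningTreeEdgeSet G s) : (fromEdgeSet s).IsTree :=
  ⟨hs.2.1, hs.2.2⟩

lemma edgeSet_fromEdgeSet (hs : IsSpanningTreeEdgeSet G s) : (fromEdgeSet s).edgeSet = s := by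
  rw [SimpleGraph.edgeSet_fromEdgeSet, sdiff_eq_left, Set.disjoint_right]
  exact fun e he hes => G.not_isDiag_of_mem_edgeSet (hs.1 hes) he

lemma parent_adj (hs : IsSpanningTreeEdgeSet G s) {r v : V} (hv : v ≠ r) :
    G.Adj v (hs.isTree.parent r v) :=
  G.mem_edgeSet.mp <| hs.1 ((fromEdgeSet_adj s).mp (hs.isTree.adj_parent hv)).1

end IsSpanningTreeEdgeSet

lemma ncard_setOf_isSpanningTreeEdgeSet_le_prod_degree {V : Type*} [Fintype V] [DecidableEq V]
    (G : SimpleGraph V) [DecidableRel G.Adj] (r : V) :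
    {s : Set (Sym2 V) | IsSpanningTreeEdgeSet G s}.ncard ≤ ∏ v : {v // v ≠ r}, G.degree v := by
  let parents : {s : Set (Sym2 V) | IsSpanningTreeEdgeSet G s} →
      ∀ v : {v // v ≠ r}, G.neighborFinset v :=
    fun s v => ⟨s.2.isTree.parent r v, (G.mem_neighborFinset _ _).mpr (s.2.parent_adj v.2)⟩
  have hinj : Function.Injective parents := by
    rintro ⟨s, hs⟩ ⟨s', hs'⟩ h
    have htree : fromEdgeSet s = fromEdgeSet s' :=
      hs.isTree.eq_of_parent_eq hs'.isTree fun v hv => congrArg Subtype.val (congrFun h ⟨v, hv⟩)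
    rw [Subtype.mk.injEq, ← hs.edgeSet_fromEdgeSet, ← hs'.edgeSet_fromEdgeSet, htree]
  calc {s : Set (Sym2 V) | IsSpanningTreeEdgeSet G s}.ncard
      ≤ Nat.card (∀ v : {v // v ≠ r}, G.neighborFinset v) :=
        (Nat.card_coe_set_eq _).symm.trans_le (Nat.card_le_card_of_injective parents hinj)
    _ = ∏ v : {v // v ≠ r}, G.degree v := by
        simp_rw [Nat.card_pi, Nat.card_eq_fintype_card, Fintype.card_coe,
          card_neighborFinset_eq_degree]

/-- **Ribó Mor's proposition, part 1.** For every finite connected simple graph with at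
least 3 vertices, the number of spanning trees is strictly smaller than the product of
all vertex degrees. -/
theorem spanning_trees_lt_prod_degrees
    {V : Type*} [Fintype V] [DecidableEq V]
    (G : SimpleGraph V) [DecidableRel G.Adj] (hconn : G.Connected)
    (hn : 3 ≤ Fintype.card V) :
    {s : Set (Sym2 V) | IsSpanningTreeEdgeSet G s}.ncard < ∏ v : V, G.degree v := by
  obtain ⟨r, hr⟩ := hconn.exists_two_le_degree hn
  have : Nontrivial V := Fintype.one_lt_card_iff_nontrivial.mp (by omega)
  have hpos : 0 < ∏ v : {v // v ≠ r}, G.degree v :=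
    Finset.prod_pos fun v _ => hconn.preconnected.degree_pos_of_nontrivial v
  calc {s : Set (Sym2 V) | IsSpanningTreeEdgeSet G s}.ncard
      ≤ ∏ v : {v // v ≠ r}, G.degree v := ncard_setOf_isSpanningTreeEdgeSet_le_prod_degree G r
    _ < G.degree r * ∏ v : {v // v ≠ r}, G.degree v := lt_mul_left hpos (by omega)
    _ = ∏ v, G.degree v := by rw [Fintype.prod_eq_mul_prod_subtype_ne _ r]
end
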